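/- arXiv:2511.20230 — 12 statements merged into one kernel-verified Lean document; each statement's English description precedes it below -/
import Mathlib

section
/- Let (𝔤, [·,·], ω) be a quasi-Frobenius Lie algebra with Levi-Civita product •. Then the orthogonal complement [𝔤,𝔤]^⊥ of the derived algebra with respect to ω equals { u ∈ 𝔤 : u•v = 0 for all v ∈ 𝔤 }, and also equals { u ∈ 𝔤 : ω([u,v],w) = −ω(v,[u,w]) for all v,w }. In particular [𝔤,𝔤]^⊥ is an abelian subalgebra of 𝔤. -/
/-!
Closedness of `ω` together with skew-symmetry says exactly that
`ω (u, [v, w]) = ω ([u, v], w) + ω (v, [u, w])`, so `u ⊥ [𝔤, 𝔤]` if and only if `ad u` is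
`ω`-skew. Substituting closedness into the Koszul-type formula for the Levi-Civita product gives
`ω (u • v, w) = ω (u, [v, w])`, and nondegeneracy turns this into `u • 𝔤 = 0 ↔ u ⊥ [𝔤, 𝔤]`.
Finally, for `u, v ⊥ [𝔤, 𝔤]` we get `[u, v] = u • v - v • u = 0`.
-/

namespace QuasiFrobenius

variable {K L : Type*} [CommRing K] [LieRing L] [LieAlgebra K L]
  {ω : L →ₗ[K] L →ₗ[K] K} {p : L →ₗ[K] L →ₗ[K] L}

theorem apply_lie_eq_add (hskew : ∀ u v, ω u v = - ω v u)
    (hclosed : ∀ u v w, ω ⁅u, v⁆ w + ω ⁅v, w⁆ u + ω ⁅w, u⁆ v = 0) (u v w : L) :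
    ω u ⁅v, w⁆ = ω ⁅u, v⁆ w + ω v ⁅u, w⁆ := by
  have hwu : ω ⁅w, u⁆ v = ω v ⁅u, w⁆ := by
    rw [← lie_skew w u, map_neg, LinearMap.neg_apply, hskew ⁅u, w⁆ v, neg_neg]
  linear_combination hskew u ⁅v, w⁆ - hclosed u v w + hwu

theorem two_mul_apply_leviCivita (hskew : ∀ u v, ω u v = - ω v u)
    (hp1 : ∀ u v, p u v - p v u = ⁅u, v⁆) (hp2 : ∀ u v w, ω (p u v) w = ω v (p u w))
    (u v w : L) :
    2 * ω (p u v) w = ω ⁅u, v⁆ w - ω ⁅v, w⁆ u + ω ⁅w, u⁆ v := by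
  have hlie : ∀ a b c : L, ω (p a b) c - ω (p b a) c = ω ⁅a, b⁆ c := fun a b c => by
    rw [← hp1, map_sub, LinearMap.sub_apply]
  have hanti : ∀ a b c : L, ω (p a b) c = - ω (p a c) b := fun a b c => by
    rw [hp2, hskew]
  linear_combination hlie u v w + hanti v u w - hlie v w u - hanti w v u + hlie w u v +
    hanti u w v

theorem apply_leviCivita_eq_apply_lie [NoZeroDivisors K] [NeZero (2 : K)]
    (hskew : ∀ u v, ω u v = - ω v u)
    (hclosed : ∀ u v w, ω ⁅u, v⁆ w + ω ⁅v, w⁆ u + ω ⁅w, u⁆ v = 0)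
    (hp1 : ∀ u v, p u v - p v u = ⁅u, v⁆) (hp2 : ∀ u v w, ω (p u v) w = ω v (p u w))
    (u v w : L) :
    ω (p u v) w = ω u ⁅v, w⁆ := by
  have h2 : 2 * (ω (p u v) w - ω u ⁅v, w⁆) = 0 := by
    linear_combination two_mul_apply_leviCivita hskew hp1 hp2 u v w + hclosed u v w -
      2 * hskew ⁅v, w⁆ u
  exact sub_eq_zero.mp ((mul_eq_zero.mp h2).resolve_left two_ne_zero)

theorem leviCivita_eq_zero_iff [NoZeroDivisors K] [NeZero (2 : K)]
    (hskew : ∀ u v, ω u v = - ω v u) (hnd : ∀ u, (∀ v, ω u v = 0) → u = 0)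
    (hclosed : ∀ u v w, ω ⁅u, v⁆ w + ω ⁅v, w⁆ u + ω ⁅w, u⁆ v = 0)
    (hp1 : ∀ u v, p u v - p v u = ⁅u, v⁆) (hp2 : ∀ u v w, ω (p u v) w = ω v (p u w))
    (u : L) :
    (∀ v, p u v = 0) ↔ ∀ v w : L, ω u ⁅v, w⁆ = 0 := by
  simp only [← apply_leviCivita_eq_apply_lie hskew hclosed hp1 hp2]
  exact ⟨fun h v w => by rw [h, map_zero, LinearMap.zero_apply], fun h v => hnd _ (h v)⟩

end QuasiFrobenius

/-- For a quasi-Frobenius Lie algebra with Levi-Civita product `p`,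
`[𝔤,𝔤]^⊥ = { u : ∀ v, u•v = 0 } = { u : ad_u is ω-anti-symmetric }`, and
`[𝔤,𝔤]^⊥` is an abelian subalgebra. -/
theorem stmt3 {K L : Type*} [Field K] [CharZero K] [LieRing L] [LieAlgebra K L]
    (ω : L →ₗ[K] L →ₗ[K] K)
    (hskew : ∀ u v, ω u v = - ω v u)
    (hnd : ∀ u, (∀ v, ω u v = 0) → u = 0)
    (hclosed : ∀ u v w, ω ⁅u, v⁆ w + ω ⁅v, w⁆ u + ω ⁅w, u⁆ v = 0)
    (p : L →ₗ[K] L →ₗ[K] L)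
    (hp1 : ∀ u v, p u v - p v u = ⁅u, v⁆)
    (hp2 : ∀ u v w, ω (p u v) w = ω v (p u w)) :
    ({u : L | ∀ v w : L, ω u ⁅v, w⁆ = 0} = {u : L | ∀ v : L, p u v = 0}) ∧
    ({u : L | ∀ v w : L, ω u ⁅v, w⁆ = 0} =
      {u : L | ∀ v w : L, ω ⁅u, v⁆ w = - ω v ⁅u, w⁆}) ∧
    (∀ u v : L, (∀ a c : L, ω u ⁅a, c⁆ = 0) → (∀ a c : L, ω v ⁅a, c⁆ = 0) → ⁅u, v⁆ = 0) := by
  have hann := QuasiFrobenius.leviCivita_eq_zero_iff hskew hnd hclosed hp1 hp2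
  refine ⟨?_, ?_, fun u v hu hv => ?_⟩
  · exact Set.ext fun u => (hann u).symm
  · refine Set.ext fun u => forall₂_congr fun v w => ?_
    rw [QuasiFrobenius.apply_lie_eq_add hskew hclosed, eq_neg_iff_add_eq_zero, eq_comm]
  · rw [← hp1, (hann u).mpr hu v, (hann v).mpr hv u, sub_zero]
end

section
/- Let (𝔤, [·,·], ω) be a quasi-Frobenius Lie algebra with Levi-Civita product •. Then the center Z(𝔤) equals (𝔤•𝔤)^⊥, where 𝔤•𝔤 is the span of all products u•v and ⊥ denotes the orthogonal with respect to ω. Moreover Z(𝔤) ⊆ [𝔤,𝔤]^⊥. -/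
/-!
Closedness of `ω` together with the two defining properties of the Levi-Civita product `p`
determine it completely: `ω (p x y) z = ω x ⁅y, z⁆` (a Koszul-type computation, where dividing
by `2` needs characteristic `≠ 2`). Hence `ω u (p v w) = -ω v ⁅w, u⁆`, and by nondegeneracy
`u ⊥ 𝔤 • 𝔤` exactly when `u` is central. That the centre is orthogonal to `[𝔤, 𝔤]` is the
closedness identity with two of its three brackets vanishing.
-/

section QuasiFrobenius

variable {R L : Type*} [CommRing R] [LieRing L] [LieAlgebra R L]
  {ω : L →ₗ[R] L →ₗ[R] R} {p : L →ₗ[R] L →ₗ[R] L}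

theorem apply_lie_eq_zero_of_forall_lie_eq_zero (hskew : ∀ u v, ω u v = - ω v u)
    (hclosed : ∀ u v w, ω ⁅u, v⁆ w + ω ⁅v, w⁆ u + ω ⁅w, u⁆ v = 0)
    {u : L} (hu : ∀ v : L, ⁅u, v⁆ = 0) (v w : L) : ω u ⁅v, w⁆ = 0 := by
  have hwu : ⁅w, u⁆ = 0 := by rw [← lie_skew, hu w, neg_zero]
  have h := hclosed v w u
  simp only [hwu, hu v, map_zero, LinearMap.zero_apply, add_zero] at h
  rw [hskew, h, neg_zero]

theorem eq_zero_of_forall_apply_right_eq_zero (hskew : ∀ u v, ω u v = - ω v u)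
    (hnd : ∀ u, (∀ v, ω u v = 0) → u = 0) {u : L} (hu : ∀ v, ω v u = 0) : u = 0 :=
  hnd u fun v => by rw [hskew, hu v, neg_zero]

theorem apply_lie_eq_add_of_leviCivita (hskew : ∀ u v, ω u v = - ω v u)
    (hp1 : ∀ u v, p u v - p v u = ⁅u, v⁆) (hp2 : ∀ u v w, ω (p u v) w = ω v (p u w))
    (x y z : L) : ω ⁅x, y⁆ z = ω (p x y) z + ω (p y z) x := by
  rw [← hp1, map_sub, LinearMap.sub_apply, hp2 y x z, hskew x (p y z)]
  ring

end QuasiFrobenius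

theorem leviCivita_apply_eq_apply_lie {K L : Type*} [Field K] [NeZero (2 : K)] [LieRing L]
    [LieAlgebra K L] {ω : L →ₗ[K] L →ₗ[K] K} {p : L →ₗ[K] L →ₗ[K] L}
    (hskew : ∀ u v, ω u v = - ω v u)
    (hclosed : ∀ u v w, ω ⁅u, v⁆ w + ω ⁅v, w⁆ u + ω ⁅w, u⁆ v = 0)
    (hp1 : ∀ u v, p u v - p v u = ⁅u, v⁆) (hp2 : ∀ u v w, ω (p u v) w = ω v (p u w))
    (x y z : L) : ω (p x y) z = ω x ⁅y, z⁆ := by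
  have h := hclosed x y z
  simp only [apply_lie_eq_add_of_leviCivita hskew hp1 hp2] at h
  have hsum : ω (p x y) z + ω (p y z) x + ω (p z x) y = 0 := by
    have h2 : (2 : K) * (ω (p x y) z + ω (p y z) x + ω (p z x) y) = 0 := by linear_combination h
    exact (mul_eq_zero.mp h2).resolve_left two_ne_zero
  rw [hskew x, apply_lie_eq_add_of_leviCivita hskew hp1 hp2]
  linear_combination hsum

/-- For a quasi-Frobenius Lie algebra with Levi-Civita product `p`,
`Z(𝔤) = (𝔤•𝔤)^⊥` and `Z(𝔤) ⊆ [𝔤,𝔤]^⊥`. -/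
theorem stmt4 {K L : Type*} [Field K] [CharZero K] [LieRing L] [LieAlgebra K L]
    (ω : L →ₗ[K] L →ₗ[K] K)
    (hskew : ∀ u v, ω u v = - ω v u)
    (hnd : ∀ u, (∀ v, ω u v = 0) → u = 0)
    (hclosed : ∀ u v w, ω ⁅u, v⁆ w + ω ⁅v, w⁆ u + ω ⁅w, u⁆ v = 0)
    (p : L →ₗ[K] L →ₗ[K] L)
    (hp1 : ∀ u v, p u v - p v u = ⁅u, v⁆)
    (hp2 : ∀ u v w, ω (p u v) w = ω v (p u w)) :
    ({u : L | ∀ v : L, ⁅u, v⁆ = 0} = {u : L | ∀ v w : L, ω u (p v w) = 0}) ∧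
    (∀ u : L, (∀ v : L, ⁅u, v⁆ = 0) → ∀ v w : L, ω u ⁅v, w⁆ = 0) := by
  have hprod (u v w : L) : ω u (p v w) = - ω v ⁅w, u⁆ := by
    rw [hskew, leviCivita_apply_eq_apply_lie hskew hclosed hp1 hp2]
  refine ⟨Set.ext fun u => ⟨fun hu v w => ?_, fun hu v => ?_⟩,
    fun u hu => apply_lie_eq_zero_of_forall_lie_eq_zero hskew hclosed hu⟩
  · rw [hprod, ← lie_skew, hu w, neg_zero, map_zero, neg_zero]
  · have hvu : ⁅v, u⁆ = 0 :=
      eq_zero_of_forall_apply_right_eq_zero hskew hnd fun w => by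
        rw [← neg_eq_zero, ← hprod, hu]
    rw [← lie_skew, hvu, neg_zero]
end

section
/- Let (𝔤, [·,·], ω) be a quasi-Frobenius Lie algebra with Levi-Civita product • (the unique product with u•v − v•u = [u,v] and ω(u•v,w) = ω(v,u•w)). Then (𝔤, •) is a right-symmetric algebra: (w•u)•v − w•(u•v) = (w•v)•u − w•(v•u) for all u,v,w ∈ 𝔤. -/
/-!
Put `f u v x = ω (u • v) x` and `c u v x = ω ⁅u, v⁆ x`. Compatibility with `ω` makes `f`
antisymmetric in its last two slots and torsion-freeness gives `f u v x - f v u x = c u v x`;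
as for the Levi-Civita connection this determines `f` (Koszul), and closedness of `ω` collapses
the Koszul formula to `ω (u • v) x = ω u ⁅v, x⁆`. Hence `ω` pairs the right-symmetry defect
`as(w, u, v) - as(w, v, u)` with `x` to `ω w (⁅u, ⁅v, x⁆⁆ - ⁅v, ⁅u, x⁆⁆ - ⁅⁅u, v⁆, x⁆)`,
which vanishes by the Jacobi identity, and nondegeneracy concludes.
-/

theorem koszul_formula {L M : Type*} [AddCommGroup M] (f c : L → L → L → M)
    (hanti : ∀ u v x, f u v x = -f u x v) (htors : ∀ u v x, f u v x - f v u x = c u v x)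
    (u v x : L) : 2 • f u v x = c u v x + c x v u - c u x v := by
  linear_combination (norm := abel) hanti u v x - hanti x u v + hanti v x u
    - htors u x v + htors x v u + htors u v x

section LeviCivita

variable {K L : Type*} [Field K] [LieRing L] [LieAlgebra K L]

def bilinAssociator (p : L →ₗ[K] L →ₗ[K] L) (a b c : L) : L :=
  p (p a b) c - p a (p b c)

theorem form_product_eq_form_lie [NeZero (2 : K)] (ω : L →ₗ[K] L →ₗ[K] K)
    (hskew : ∀ u v, ω u v = - ω v u)
    (hclosed : ∀ u v w, ω ⁅u, v⁆ w + ω ⁅v, w⁆ u + ω ⁅w, u⁆ v = 0)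
    (p : L →ₗ[K] L →ₗ[K] L) (hp1 : ∀ u v, p u v - p v u = ⁅u, v⁆)
    (hp2 : ∀ u v w, ω (p u v) w = ω v (p u w)) (u v x : L) :
    ω (p u v) x = ω u ⁅v, x⁆ := by
  have hkoszul := koszul_formula (fun u v x => ω (p u v) x) (fun u v x => ω ⁅u, v⁆ x)
    (fun u v x => by rw [hp2, hskew]) (fun u v x => by rw [← LinearMap.sub_apply, ← map_sub, hp1])
    u v x
  have hxv : ω ⁅x, v⁆ u = -ω ⁅v, x⁆ u := by rw [← lie_skew, map_neg, LinearMap.neg_apply]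
  have hxu : ω ⁅x, u⁆ v = -ω ⁅u, x⁆ v := by rw [← lie_skew, map_neg, LinearMap.neg_apply]
  rw [two_nsmul] at hkoszul
  refine mul_left_cancel₀ (two_ne_zero (α := K)) ?_
  linear_combination hkoszul + hxv - hxu + hclosed u v x - 2 * hskew u ⁅v, x⁆

theorem bilinAssociator_right_symm (ω : L →ₗ[K] L →ₗ[K] K)
    (hnd : ∀ u, (∀ v, ω u v = 0) → u = 0)
    (p : L →ₗ[K] L →ₗ[K] L) (hp1 : ∀ u v, p u v - p v u = ⁅u, v⁆)
    (hform : ∀ u v x, ω (p u v) x = ω u ⁅v, x⁆) (u v w : L) :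
    bilinAssociator p w u v = bilinAssociator p w v u := by
  refine sub_eq_zero.mp <| hnd _ fun x => ?_
  have hjacobi : ⁅u, ⁅v, x⁆⁆ - ⁅v, ⁅u, x⁆⁆ - ⁅p u v - p v u, x⁆ = 0 := by
    rw [hp1, leibniz_lie u v x]
    abel
  calc ω (bilinAssociator p w u v - bilinAssociator p w v u) x
      = ω w (⁅u, ⁅v, x⁆⁆ - ⁅v, ⁅u, x⁆⁆ - ⁅p u v - p v u, x⁆) := by
        simp only [bilinAssociator, map_sub, LinearMap.sub_apply, hform, sub_lie]
        abel
    _ = 0 := by rw [hjacobi, map_zero]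

end LeviCivita

/-- The Levi-Civita product of a quasi-Frobenius Lie algebra is
right-symmetric. -/
theorem stmt6 {K L : Type*} [Field K] [CharZero K] [LieRing L] [LieAlgebra K L]
    (ω : L →ₗ[K] L →ₗ[K] K)
    (hskew : ∀ u v, ω u v = - ω v u)
    (hnd : ∀ u, (∀ v, ω u v = 0) → u = 0)
    (hclosed : ∀ u v w, ω ⁅u, v⁆ w + ω ⁅v, w⁆ u + ω ⁅w, u⁆ v = 0)
    (p : L →ₗ[K] L →ₗ[K] L)
    (hp1 : ∀ u v, p u v - p v u = ⁅u, v⁆)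
    (hp2 : ∀ u v w, ω (p u v) w = ω v (p u w)) :
    ∀ u v w : L, p (p w u) v - p w (p u v) = p (p w v) u - p w (p v u) := fun u v w =>
  bilinAssociator_right_symm ω hnd p hp1
    (form_product_eq_form_lie ω hskew hclosed p hp1 hp2) u v w
end

section
/- Let (𝔞, ∘) be a non-associative algebra over a field of characteristic zero with a non-degenerate skew-symmetric form ω that is closed for ∘ (i.e., ω(u∘v,w) + ω(v∘w,u) + ω(w∘u,v) = 0). Then the following are equivalent: (i) (𝔞,∘) is left-symmetric and ω(u∘v, w) = ω(u, w∘v) for all u,v,w; (ii) the commutator bracket [u,v] = u∘v − v∘u makes (𝔞, [·,·], ω) a quasi-Frobenius Lie algebra and ω(u∘v, w) = −ω(v, [u,w]) for all u,v,w. -/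
/-!
Write `L_x y = x ∘ y` and `ad_x y = [x, y]`. Given closedness and skew-symmetry of `ω`,
the identity `ω(u ∘ v, w) = ω(u, w ∘ v)` is a rearrangement of `ω(L_u v, w) = -ω(v, ad_u w)`,
which says that `-ad_u` is the `ω`-adjoint of `L_u`. Left symmetry says `L_{[u,v]} = [L_u, L_v]`;
passing to adjoints, this becomes `ad_{[u,v]} = [ad_u, ad_v]`, the Jacobi identity, and
non-degeneracy of `ω` lets one go back. Closedness of `ω` for the bracket is the difference of two
instances of its closedness for `∘`.
-/

section

variable {K A : Type*} [CommRing K] [AddCommGroup A] [Module K A]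

def commBracket (m : A →ₗ[K] A →ₗ[K] A) (u v : A) : A := m u v - m v u

def IsLeftSymmetric (m : A →ₗ[K] A →ₗ[K] A) : Prop :=
  ∀ u v w, m (m u v) w - m u (m v w) = m (m v u) w - m v (m u w)

variable (m : A →ₗ[K] A →ₗ[K] A) (ω : A →ₗ[K] A →ₗ[K] K)

theorem commBracket_jacobi_of_isLeftSymmetric (hls : IsLeftSymmetric m) (u v w : A) :
    commBracket m (commBracket m u v) w + commBracket m (commBracket m v w) u +
      commBracket m (commBracket m w u) v = 0 := by
  simp only [commBracket, map_sub, LinearMap.sub_apply]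
  linear_combination (norm := module) hls u v w + hls v w u + hls w u v

theorem closed_commBracket_of_closed
    (hclosed : ∀ u v w, ω (m u v) w + ω (m v w) u + ω (m w u) v = 0) (u v w : A) :
    ω (commBracket m u v) w + ω (commBracket m v w) u + ω (commBracket m w u) v = 0 := by
  simp only [commBracket, map_sub, LinearMap.sub_apply]
  linear_combination hclosed u v w - hclosed w v u

theorem rightMul_symm_iff_leftMul_adjoint (hskew : ∀ u v, ω u v = - ω v u)
    (hclosed : ∀ u v w, ω (m u v) w + ω (m v w) u + ω (m w u) v = 0) :
    (∀ u v w, ω (m u v) w = ω u (m w v)) ↔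
      ∀ u v w, ω (m u v) w = - ω v (commBracket m u w) := by
  simp only [commBracket, map_sub]
  constructor
  · intro hsym u v w
    linear_combination hclosed u v w - hsym v w u - hskew (m w u) v
  · intro hadj u v w
    linear_combination hclosed w u v - hadj w u v - hskew (m v w) u

theorem isLeftSymmetric_of_jacobi (hnd : ∀ u, (∀ v, ω u v = 0) → u = 0)
    (hjac : ∀ u v w, commBracket m (commBracket m u v) w + commBracket m (commBracket m v w) u +
      commBracket m (commBracket m w u) v = 0)
    (hadj : ∀ u v w, ω (m u v) w = - ω v (commBracket m u w)) :
    IsLeftSymmetric m := by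
  intro u v w
  rw [← sub_eq_zero]
  refine hnd _ fun d => ?_
  calc ω (m (m u v) w - m u (m v w) - (m (m v u) w - m v (m u w))) d
      = ω (m (commBracket m u v) w) d - ω (m u (m v w)) d + ω (m v (m u w)) d := by
        simp only [commBracket, map_sub, LinearMap.sub_apply]; ring
    _ = - ω w (commBracket m (commBracket m u v) d) - ω w (commBracket m v (commBracket m u d))
          + ω w (commBracket m u (commBracket m v d)) := by
        rw [hadj, hadj u, hadj v w, hadj v, hadj u w]; ring
    _ = - ω w (commBracket m (commBracket m u v) d + commBracket m (commBracket m v d) u +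
          commBracket m (commBracket m d u) v) := by
        simp only [commBracket, map_add, map_sub, LinearMap.sub_apply]; ring
    _ = 0 := by rw [hjac, map_zero, neg_zero]

end

theorem stmt7_general {K A : Type*} [Field K] [AddCommGroup A] [Module K A]
    (m : A →ₗ[K] A →ₗ[K] A)
    (ω : A →ₗ[K] A →ₗ[K] K)
    (hskew : ∀ u v, ω u v = - ω v u)
    (hnd : ∀ u, (∀ v, ω u v = 0) → u = 0)
    (hclosed : ∀ u v w, ω (m u v) w + ω (m v w) u + ω (m w u) v = 0) :
    ((∀ u v w, m (m u v) w - m u (m v w) = m (m v u) w - m v (m u w)) ∧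
      (∀ u v w, ω (m u v) w = ω u (m w v)))
    ↔
    ((∀ u v w : A,
        (m (m u v - m v u) w - m w (m u v - m v u)) +
        (m (m v w - m w v) u - m u (m v w - m w v)) +
        (m (m w u - m u w) v - m v (m w u - m u w)) = 0) ∧
      (∀ u v w, ω (m u v - m v u) w + ω (m v w - m w v) u + ω (m w u - m u w) v = 0) ∧
      (∀ u v w, ω (m u v) w = - ω v (m u w - m w u))) := by
  have hadj_iff := rightMul_symm_iff_leftMul_adjoint m ω hskew hclosed
  constructor
  · rintro ⟨hls, hsym⟩
    exact ⟨commBracket_jacobi_of_isLeftSymmetric m hls, closed_commBracket_of_closed m ω hclosed,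
      hadj_iff.mp hsym⟩
  · rintro ⟨hjac, -, hadj⟩
    exact ⟨isLeftSymmetric_of_jacobi m ω hnd hjac hadj, hadj_iff.mpr hadj⟩

/-- Equivalence between left-symmetric structures with ω-symmetric
right multiplications and quasi-Frobenius Lie structures on the commutator bracket
with `ω(u∘v,w) = −ω(v,[u,w])`. -/
theorem stmt7 {K A : Type*} [Field K] [CharZero K] [AddCommGroup A] [Module K A]
    (m : A →ₗ[K] A →ₗ[K] A)
    (ω : A →ₗ[K] A →ₗ[K] K)
    (hskew : ∀ u v, ω u v = - ω v u)
    (hnd : ∀ u, (∀ v, ω u v = 0) → u = 0)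
    (hclosed : ∀ u v w, ω (m u v) w + ω (m v w) u + ω (m w u) v = 0) :
    ((∀ u v w, m (m u v) w - m u (m v w) = m (m v u) w - m v (m u w)) ∧
      (∀ u v w, ω (m u v) w = ω u (m w v)))
    ↔
    ((∀ u v w : A,
        (m (m u v - m v u) w - m w (m u v - m v u)) +
        (m (m v w - m w v) u - m u (m v w - m w v)) +
        (m (m w u - m u w) v - m v (m w u - m u w)) = 0) ∧
      (∀ u v w, ω (m u v - m v u) w + ω (m v w - m w v) u + ω (m w u - m u w) v = 0) ∧
      (∀ u v w, ω (m u v) w = - ω v (m u w - m w u))) :=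
  stmt7_general m ω hskew hnd hclosed
end

section
/- Let (E, ω) be a finite-dimensional symplectic vector space over a field of characteristic zero. Then there exists a nonzero symmetric bilinear map f : E × E → E such that ω(f(u,v), w) = −ω(v, f(u,w)) for all u,v,w ∈ E. Consequently, if ⋆ is a symplectic product on a quasi-Frobenius Lie algebra (𝔤, [·,·], ω), then u ⋆̄ v := u⋆v + f(u,v) is another (distinct) symplectic product; in particular symplectic products are not unique. -/
/-!
For any `a` and linear form `φ`, the map `f(u,v) = φ(u) φ(v) a` is symmetric and nonzero as soon
as `φ ≠ 0` and `a ≠ 0`. Taking `φ = ω(a, ·)`, which is nonzero by non-degeneracy, gives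
`ω(f(u,v),w) = ω(a,u) ω(a,v) ω(a,w)`, which is totally symmetric, and skewness of `ω` turns this
into `ω(f(u,v),w) = -ω(v,f(u,w))`. Adding such an `f` to a symplectic product leaves the
commutator unchanged (by symmetry) and keeps the compatibility with `ω` (by linearity).
-/

namespace LinearMap

section CommRing

variable {R M : Type*} [CommRing R] [AddCommGroup M] [Module R M]

theorem smulRight_smulRight_self_comm (φ : M →ₗ[R] R) (a u v : M) :
    φ.smulRight (φ.smulRight a) u v = φ.smulRight (φ.smulRight a) v u := by
  simp only [smulRight_apply, smul_apply, smul_smul, mul_comm]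

theorem smulRight_smulRight_apply_left_eq_neg (ω : M →ₗ[R] M →ₗ[R] R)
    (hskew : ∀ u v, ω u v = - ω v u) (a u v w : M) :
    ω ((ω a).smulRight ((ω a).smulRight a) u v) w
      = - ω v ((ω a).smulRight ((ω a).smulRight a) u w) := by
  simp only [smulRight_apply, map_smul, smul_apply, smul_eq_mul]
  rw [hskew v a]
  ring

end CommRing

theorem smulRight_smulRight_self_ne_zero {K M : Type*} [Field K] [AddCommGroup M] [Module K M]
    {φ : M →ₗ[K] K} (hφ : φ ≠ 0) {a : M} (ha : a ≠ 0) :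
    φ.smulRight (φ.smulRight a) ≠ 0 := by
  obtain ⟨u, hu⟩ : ∃ u, φ u ≠ 0 := by
    by_contra! h
    exact hφ (LinearMap.ext h)
  intro h
  have huu : (φ u * φ u) • a = 0 := by
    simpa [smul_smul] using LinearMap.congr_fun₂ h u u
  exact smul_ne_zero (mul_ne_zero hu hu) ha huu

end LinearMap

open LinearMap

theorem exists_symm_ne_zero_apply_left_eq_neg {K E : Type*} [Field K] [AddCommGroup E]
    [Module K E] [Nontrivial E] (ω : E →ₗ[K] E →ₗ[K] K)
    (hskew : ∀ u v, ω u v = - ω v u) (hnd : ∀ u, (∀ v, ω u v = 0) → u = 0) :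
    ∃ f : E →ₗ[K] E →ₗ[K] E, f ≠ 0 ∧ (∀ u v, f u v = f v u) ∧
      (∀ u v w, ω (f u v) w = - ω v (f u w)) := by
  obtain ⟨a, ha⟩ := exists_ne (0 : E)
  have hωa : ω a ≠ 0 := fun h => ha (hnd a fun v => by simp [h])
  exact ⟨_, smulRight_smulRight_self_ne_zero hωa ha, smulRight_smulRight_self_comm (ω a) a,
    smulRight_smulRight_apply_left_eq_neg ω hskew a⟩

section Deformation

variable {R M N : Type*} [CommRing R] [AddCommGroup M] [Module R M] [AddCommGroup N]
  [Module R N]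

theorem add_apply_sub_add_apply_swap {p f : M →ₗ[R] M →ₗ[R] N} (hf : ∀ u v, f u v = f v u)
    (u v : M) : (p + f) u v - (p + f) v u = p u v - p v u := by
  simp only [LinearMap.add_apply, hf u v]
  abel

theorem add_apply_left_eq_neg {ω : M →ₗ[R] M →ₗ[R] R} {p f : M →ₗ[R] M →ₗ[R] M}
    (hp : ∀ u v w, ω (p u v) w = - ω v (p u w)) (hf : ∀ u v w, ω (f u v) w = - ω v (f u w))
    (u v w : M) : ω ((p + f) u v) w = - ω v ((p + f) u w) := by
  simp only [LinearMap.add_apply, map_add, hp, hf]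
  ring

end Deformation

theorem stmt9_general {K E L : Type*} [Field K]
    [AddCommGroup E] [Module K E] [Nontrivial E]
    (ωE : E →ₗ[K] E →ₗ[K] K)
    (hEskew : ∀ u v, ωE u v = - ωE v u)
    (hEnd : ∀ u, (∀ v, ωE u v = 0) → u = 0)
    [LieRing L] [LieAlgebra K L] [Nontrivial L]
    (ω : L →ₗ[K] L →ₗ[K] K)
    (hskew : ∀ u v, ω u v = - ω v u)
    (hnd : ∀ u, (∀ v, ω u v = 0) → u = 0)
    (p : L →ₗ[K] L →ₗ[K] L)
    (hp1 : ∀ u v, p u v - p v u = ⁅u, v⁆)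
    (hp2 : ∀ u v w, ω (p u v) w = - ω v (p u w)) :
    (∃ f : E →ₗ[K] E →ₗ[K] E, f ≠ 0 ∧ (∀ u v, f u v = f v u) ∧
      (∀ u v w, ωE (f u v) w = - ωE v (f u w))) ∧
    (∃ f : L →ₗ[K] L →ₗ[K] L, f ≠ 0 ∧ (∀ u v, f u v = f v u) ∧
      (∀ u v w, ω (f u v) w = - ω v (f u w)) ∧
      (∀ u v, (p + f) u v - (p + f) v u = ⁅u, v⁆) ∧
      (∀ u v w, ω ((p + f) u v) w = - ω v ((p + f) u w)) ∧
      p + f ≠ p) := by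
  obtain ⟨f, hf0, hfs, hfω⟩ := exists_symm_ne_zero_apply_left_eq_neg ω hskew hnd
  refine ⟨exists_symm_ne_zero_apply_left_eq_neg ωE hEskew hEnd, f, hf0, hfs, hfω,
    fun u v => (add_apply_sub_add_apply_swap hfs u v).trans (hp1 u v),
    add_apply_left_eq_neg hp2 hfω, ?_⟩
  rw [Ne, add_eq_left]
  exact hf0

/-- On a (nontrivial, finite-dimensional) symplectic vector space there
is a nonzero symmetric bilinear map `f` with `ω(f(u,v),w) = −ω(v,f(u,w))`; hence a
symplectic product on a quasi-Frobenius Lie algebra can be deformed to a distinct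
symplectic product, so symplectic products are not unique. -/
theorem stmt9 {K E L : Type*} [Field K] [CharZero K]
    [AddCommGroup E] [Module K E] [FiniteDimensional K E] [Nontrivial E]
    (ωE : E →ₗ[K] E →ₗ[K] K)
    (hEskew : ∀ u v, ωE u v = - ωE v u)
    (hEnd : ∀ u, (∀ v, ωE u v = 0) → u = 0)
    [LieRing L] [LieAlgebra K L] [FiniteDimensional K L] [Nontrivial L]
    (ω : L →ₗ[K] L →ₗ[K] K)
    (hskew : ∀ u v, ω u v = - ω v u)
    (hnd : ∀ u, (∀ v, ω u v = 0) → u = 0)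
    (hclosed : ∀ u v w, ω ⁅u, v⁆ w + ω ⁅v, w⁆ u + ω ⁅w, u⁆ v = 0)
    (p : L →ₗ[K] L →ₗ[K] L)
    (hp1 : ∀ u v, p u v - p v u = ⁅u, v⁆)
    (hp2 : ∀ u v w, ω (p u v) w = - ω v (p u w)) :
    (∃ f : E →ₗ[K] E →ₗ[K] E, f ≠ 0 ∧ (∀ u v, f u v = f v u) ∧
      (∀ u v w, ωE (f u v) w = - ωE v (f u w))) ∧
    (∃ f : L →ₗ[K] L →ₗ[K] L, f ≠ 0 ∧ (∀ u v, f u v = f v u) ∧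
      (∀ u v w, ω (f u v) w = - ω v (f u w)) ∧
      (∀ u v, (p + f) u v - (p + f) v u = ⁅u, v⁆) ∧
      (∀ u v w, ω ((p + f) u v) w = - ω v ((p + f) u w)) ∧
      p + f ≠ p) :=
  stmt9_general ωE hEskew hEnd ω hskew hnd p hp1 hp2
end

section
/- Let (𝔤, [·,·], ω) be a quasi-Frobenius Lie algebra over a field of characteristic zero. Then the product ⋆ defined by ω(u⋆v, w) = (1/3)(ω([u,v],w) + ω([u,w],v)) is a symplectic product: it satisfies u⋆v − v⋆u = [u,v] and ω(u⋆v, w) = −ω(v, u⋆w) for all u,v,w. Moreover it is the unique symplectic product expressible as ω(u⋆v,w) = a·ω([u,v],w) + b·ω([u,w],v) + c·ω([v,w],u) for scalars a,b,c. -/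
/-!
Closedness of `ω` gives `ω([v,w],u) = ω([u,w],v) - ω([u,v],w)`, so every candidate product has
`ω(u⋆v,w) = p ω([u,v],w) + q ω([u,w],v)` with `p = a - c`, `q = b + c`. The `ω`-antisymmetry of
left multiplications makes `(p - q) ω([u,v],w)` symmetric in `v, w`; as it is also antisymmetric
in `u, v`, it vanishes. The commutator condition gives `(2p + q - 1) ω([u,v],w) = 0`. These two
relations force `ω(u⋆v,w) = (ω([u,v],w) + ω([u,w],v)) / 3`, and nondegeneracy then determines `⋆`.
Existence holds because a nondegenerate form identifies a finite-dimensional space with its dual.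
-/

namespace LinearMap.SeparatingLeft

theorem eq_of_forall_apply_eq {R M N : Type*} [CommRing R] [AddCommGroup M] [Module R M]
    [AddCommGroup N] [Module R N] {B : M →ₗ[R] N →ₗ[R] R} (hB : B.SeparatingLeft) {x y : M}
    (h : ∀ z, B x z = B y z) : x = y :=
  sub_eq_zero.mp <| hB _ fun z => by rw [map_sub, sub_apply, h z, sub_self]

theorem exists_forall_apply_eq {K V : Type*} [Field K] [AddCommGroup V] [Module K V]
    [FiniteDimensional K V] {B : V →ₗ[K] V →ₗ[K] K} (hB : B.SeparatingLeft)
    (Φ : V →ₗ[K] V →ₗ[K] Module.Dual K V) :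
    ∃ s : V →ₗ[K] V →ₗ[K] V, ∀ u v, B (s u v) = Φ u v := by
  let e := B.linearEquivOfInjective (ker_eq_bot.mp (separatingLeft_iff_ker_eq_bot.mp hB))
    Subspace.dual_finrank_eq.symm
  exact ⟨Φ.compr₂ e.symm.toLinearMap, fun u v => e.apply_symm_apply (Φ u v)⟩

end LinearMap.SeparatingLeft

theorem eq_zero_of_antisymm_of_symm {α M : Type*} [AddCommGroup M] [IsAddTorsionFree M]
    {f : α → α → α → M} (hanti : ∀ u v w, f u v w = -f v u w)
    (hsymm : ∀ u v w, f u v w = f u w v) (u v w : α) : f u v w = 0 := by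
  have hneg : f u v w = -f u v w := calc
    f u v w = -f v u w := hanti u v w
    _ = -f v w u := by rw [hsymm]
    _ = f w v u := by rw [hanti, neg_neg]
    _ = f w u v := hsymm w v u
    _ = -f u w v := hanti w u v
    _ = -f u v w := by rw [hsymm]
  exact two_nsmul_eq_zero.mp (by rw [two_nsmul]; exact add_eq_zero_iff_eq_neg.mpr hneg)

section QuasiFrobenius

variable {K L : Type*} [Field K] [LieRing L] [LieAlgebra K L] (ω : L →ₗ[K] L →ₗ[K] K)

def IsSymplecticProduct (s : L →ₗ[K] L →ₗ[K] L) : Prop :=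
  (∀ u v, s u v - s v u = ⁅u, v⁆) ∧ ∀ u v w, ω (s u v) w = -ω v (s u w)

theorem apply_lie_swap (u v w : L) : ω ⁅u, v⁆ w = -ω ⁅v, u⁆ w := by
  rw [← lie_skew, map_neg, LinearMap.neg_apply]

variable {ω}

theorem apply_lie_eq_of_closed (hclosed : ∀ u v w, ω ⁅u, v⁆ w + ω ⁅v, w⁆ u + ω ⁅w, u⁆ v = 0)
    (u v w : L) : ω ⁅u, v⁆ w = ω ⁅u, w⁆ v - ω ⁅v, w⁆ u := by
  linear_combination hclosed u v w - apply_lie_swap ω w u v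

theorem exists_natural_product [FiniteDimensional K L] (hnd : ω.SeparatingLeft) :
    ∃ s : L →ₗ[K] L →ₗ[K] L,
      ∀ u v w, ω (s u v) w = (1/3 : K) * (ω ⁅u, v⁆ w + ω ⁅u, w⁆ v) := by
  let H : L →ₗ[K] L →ₗ[K] Module.Dual K L := (LieAlgebra.ad K L).compr₂ ω
  obtain ⟨s, hs⟩ := hnd.exists_forall_apply_eq ((1/3 : K) • (H + LinearMap.lflip.toLinearMap ∘ₗ H))
  refine ⟨s, fun u v w => ?_⟩
  simp [hs, H, LieAlgebra.ad_apply, mul_add]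

variable [CharZero K]

theorem isSymplecticProduct_of_apply_eq (hskew : ∀ u v, ω u v = -ω v u)
    (hnd : ω.SeparatingLeft)
    (hclosed : ∀ u v w, ω ⁅u, v⁆ w + ω ⁅v, w⁆ u + ω ⁅w, u⁆ v = 0) {s : L →ₗ[K] L →ₗ[K] L}
    (hs : ∀ u v w, ω (s u v) w = (1/3 : K) * (ω ⁅u, v⁆ w + ω ⁅u, w⁆ v)) :
    IsSymplecticProduct ω s := by
  refine ⟨fun u v => hnd.eq_of_forall_apply_eq fun w => ?_, fun u v w => ?_⟩
  · rw [map_sub, LinearMap.sub_apply, hs, hs]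
    linear_combination (-1/3 : K) * apply_lie_swap ω v u w
      - (1/3 : K) * apply_lie_eq_of_closed hclosed u v w
  · rw [hs, hskew v, hs]
    ring

theorem apply_eq_of_isSymplecticProduct (hskew : ∀ u v, ω u v = -ω v u)
    (hclosed : ∀ u v w, ω ⁅u, v⁆ w + ω ⁅v, w⁆ u + ω ⁅w, u⁆ v = 0) {t : L →ₗ[K] L →ₗ[K] L}
    {a b c : K}
    (ht : ∀ u v w, ω (t u v) w = a * ω ⁅u, v⁆ w + b * ω ⁅u, w⁆ v + c * ω ⁅v, w⁆ u)
    (hsymp : IsSymplecticProduct ω t) (u v w : L) :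
    ω (t u v) w = (1/3 : K) * (ω ⁅u, v⁆ w + ω ⁅u, w⁆ v) := by
  have hcyclic := apply_lie_eq_of_closed hclosed
  have hform : ∀ u v w, ω (t u v) w = (a - c) * ω ⁅u, v⁆ w + (b + c) * ω ⁅u, w⁆ v := by
    intro u v w
    linear_combination ht u v w + c * hcyclic u v w
  have hcomm : ∀ u v w : L, (2 * (a - c) + (b + c) - 1) * ω ⁅u, v⁆ w = 0 := by
    intro u v w
    have hbracket := congr(ω $(hsymp.1 u v) w)
    rw [map_sub, LinearMap.sub_apply, hform, hform] at hbracket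
    linear_combination hbracket + (a - c) * apply_lie_swap ω v u w + (b + c) * hcyclic u v w
  have hsymm : ∀ u v w : L, (a - c - (b + c)) * ω ⁅u, v⁆ w = 0 := by
    refine eq_zero_of_antisymm_of_symm (fun u v w => ?_) (fun u v w => ?_)
    · rw [apply_lie_swap]; ring
    · have hleft := hsymp.2 u v w
      rw [hskew v, neg_neg, hform, hform] at hleft
      linear_combination hleft
  linear_combination hform u v w
    + (1/3 : K) * (hcomm u v w + hsymm u v w + hcomm u w v - 2 * hsymm u w v)

end QuasiFrobenius

/-- The natural symplectic product of a quasi-Frobenius Lie algebra,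
defined by `ω(u⋆v,w) = (1/3)(ω([u,v],w) + ω([u,w],v))`, exists, is a symplectic
product, and is the unique symplectic product expressible as a combination
`a·ω([u,v],w) + b·ω([u,w],v) + c·ω([v,w],u)`. -/
theorem stmt10 {K L : Type*} [Field K] [CharZero K] [LieRing L] [LieAlgebra K L]
    [FiniteDimensional K L]
    (ω : L →ₗ[K] L →ₗ[K] K)
    (hskew : ∀ u v, ω u v = - ω v u)
    (hnd : ∀ u, (∀ v, ω u v = 0) → u = 0)
    (hclosed : ∀ u v w, ω ⁅u, v⁆ w + ω ⁅v, w⁆ u + ω ⁅w, u⁆ v = 0) :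
    (∃ s : L →ₗ[K] L →ₗ[K] L,
      ∀ u v w, ω (s u v) w = (1/3 : K) * (ω ⁅u, v⁆ w + ω ⁅u, w⁆ v)) ∧
    (∀ s : L →ₗ[K] L →ₗ[K] L,
      (∀ u v w, ω (s u v) w = (1/3 : K) * (ω ⁅u, v⁆ w + ω ⁅u, w⁆ v)) →
      (∀ u v, s u v - s v u = ⁅u, v⁆) ∧
      (∀ u v w, ω (s u v) w = - ω v (s u w)) ∧
      (∀ (a b c : K) (t : L →ₗ[K] L →ₗ[K] L),
        (∀ u v w, ω (t u v) w = a * ω ⁅u, v⁆ w + b * ω ⁅u, w⁆ v + c * ω ⁅v, w⁆ u) →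
        (∀ u v, t u v - t v u = ⁅u, v⁆) →
        (∀ u v w, ω (t u v) w = - ω v (t u w)) →
        t = s)) := by
  refine ⟨exists_natural_product hnd, fun s hs => ?_⟩
  obtain ⟨hcomm, hanti⟩ := isSymplecticProduct_of_apply_eq hskew hnd hclosed hs
  refine ⟨hcomm, hanti, fun a b c t ht htcomm htanti => ?_⟩
  ext u v
  refine LinearMap.SeparatingLeft.eq_of_forall_apply_eq hnd fun w => ?_
  rw [hs, apply_eq_of_isSymplecticProduct hskew hclosed ht ⟨htcomm, htanti⟩]
end

section
/- Let (𝔤, [·,·], ω) be a quasi-Frobenius Lie algebra and ⋆ its natural symplectic product, defined by ω(u⋆v,w) = (1/3)(ω([u,v],w) + ω([u,w],v)). Then for every u ∈ 𝔤, the left and right multiplications satisfy L⋆_u = (1/3)(ad_u − ad_u*) and R⋆_u = −(1/3)(2 ad_u + ad_u*), where ad_u* denotes the adjoint of ad_u with respect to ω (i.e., ω(ad_u v, w) = ω(v, ad_u* w)). -/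
/-!
Pairing both sides with an arbitrary `w` reduces each identity to a scalar one, by nondegeneracy
of `ω`. For `L⋆_u` the defining formula of `⋆` and the adjoint relation
`ω (ad_u* v) w = -ω ⁅u, w⁆ v` (skew-symmetry) suffice; for `R⋆_u` one also needs
closedness of `ω`, which trades `ω ⁅v, w⁆ u` for the two terms involving `ad_u`.
-/

theorem LinearMap.SeparatingLeft.eq_of_forall_apply_eq_s11 {R M N : Type*} [CommRing R]
    [AddCommGroup M] [Module R M] [AddCommGroup N] [Module R N] {B : M →ₗ[R] N →ₗ[R] R}
    (hB : B.SeparatingLeft) {x y : M} (h : ∀ w, B x w = B y w) : x = y :=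
  sub_eq_zero.mp <| hB _ fun w ↦ by simp [h w]

section QuasiFrobenius

variable {K L : Type*} [Field K] [LieRing L] [LieAlgebra K L] {ω : L →ₗ[K] L →ₗ[K] K}
  {s : L →ₗ[K] L →ₗ[K] L} {u : L} {A : L →ₗ[K] L}

theorem form_lie_swap (u v w : L) : ω ⁅v, u⁆ w = -ω ⁅u, v⁆ w := by
  rw [← lie_skew, map_neg, LinearMap.neg_apply]

theorem form_adjoint_apply (hskew : ∀ u v, ω u v = -ω v u)
    (hA : ∀ v w, ω ⁅u, v⁆ w = ω v (A w)) (v w : L) : ω (A v) w = -ω ⁅u, w⁆ v := by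
  rw [hA, hskew]

theorem form_symplecticProduct_left (hskew : ∀ u v, ω u v = -ω v u)
    (hs : ∀ u v w, ω (s u v) w = (1/3 : K) * (ω ⁅u, v⁆ w + ω ⁅u, w⁆ v))
    (hA : ∀ v w, ω ⁅u, v⁆ w = ω v (A w)) (v w : L) :
    ω (s u v) w = ω ((1/3 : K) • (⁅u, v⁆ - A v)) w := by
  simp only [hs, map_smul, map_sub, LinearMap.smul_apply, LinearMap.sub_apply, smul_eq_mul,
    form_adjoint_apply hskew hA]
  ring

theorem form_symplecticProduct_right (hskew : ∀ u v, ω u v = -ω v u)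
    (hclosed : ∀ u v w, ω ⁅u, v⁆ w + ω ⁅v, w⁆ u + ω ⁅w, u⁆ v = 0)
    (hs : ∀ u v w, ω (s u v) w = (1/3 : K) * (ω ⁅u, v⁆ w + ω ⁅u, w⁆ v))
    (hA : ∀ v w, ω ⁅u, v⁆ w = ω v (A w)) (v w : L) :
    ω (s v u) w = ω (-(1/3 : K) • ((2 : K) • ⁅u, v⁆ + A v)) w := by
  simp only [hs, map_smul, map_add, LinearMap.smul_apply, LinearMap.add_apply, smul_eq_mul,
    form_adjoint_apply hskew hA]
  linear_combination (1/3 : K) * (hclosed u v w - form_lie_swap (ω := ω) w u v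
    + form_lie_swap (ω := ω) u v w)

end QuasiFrobenius

theorem stmt11_general {K L : Type*} [Field K] [LieRing L] [LieAlgebra K L]
    (ω : L →ₗ[K] L →ₗ[K] K)
    (hskew : ∀ u v, ω u v = - ω v u)
    (hnd : ∀ u, (∀ v, ω u v = 0) → u = 0)
    (hclosed : ∀ u v w, ω ⁅u, v⁆ w + ω ⁅v, w⁆ u + ω ⁅w, u⁆ v = 0)
    (s : L →ₗ[K] L →ₗ[K] L)
    (hs : ∀ u v w, ω (s u v) w = (1/3 : K) * (ω ⁅u, v⁆ w + ω ⁅u, w⁆ v)) :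
    ∀ (u : L) (A : L →ₗ[K] L),
      (∀ v w, ω ⁅u, v⁆ w = ω v (A w)) →
      (∀ v, s u v = (1/3 : K) • (⁅u, v⁆ - A v)) ∧
      (∀ v, s v u = -(1/3 : K) • ((2 : K) • ⁅u, v⁆ + A v)) := by
  intro u A hA
  exact ⟨fun v ↦ LinearMap.SeparatingLeft.eq_of_forall_apply_eq_s11 hnd
      (form_symplecticProduct_left hskew hs hA v),
    fun v ↦ LinearMap.SeparatingLeft.eq_of_forall_apply_eq_s11 hnd
      (form_symplecticProduct_right hskew hclosed hs hA v)⟩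

/-- For the natural symplectic product of a quasi-Frobenius Lie
algebra one has `L⋆_u = (1/3)(ad_u − ad_u*)` and `R⋆_u = −(1/3)(2 ad_u + ad_u*)`,
where `ad_u*` is the ω-adjoint of `ad_u`. -/
theorem stmt11 {K L : Type*} [Field K] [CharZero K] [LieRing L] [LieAlgebra K L]
    (ω : L →ₗ[K] L →ₗ[K] K)
    (hskew : ∀ u v, ω u v = - ω v u)
    (hnd : ∀ u, (∀ v, ω u v = 0) → u = 0)
    (hclosed : ∀ u v w, ω ⁅u, v⁆ w + ω ⁅v, w⁆ u + ω ⁅w, u⁆ v = 0)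
    (s : L →ₗ[K] L →ₗ[K] L)
    (hs : ∀ u v w, ω (s u v) w = (1/3 : K) * (ω ⁅u, v⁆ w + ω ⁅u, w⁆ v)) :
    ∀ (u : L) (A : L →ₗ[K] L),
      (∀ v w, ω ⁅u, v⁆ w = ω v (A w)) →
      (∀ v, s u v = (1/3 : K) • (⁅u, v⁆ - A v)) ∧
      (∀ v, s v u = -(1/3 : K) • ((2 : K) • ⁅u, v⁆ + A v)) :=
  stmt11_general ω hskew hnd hclosed s hs
end

section
/- Let (𝔤, [·,·], ω) be a quasi-Frobenius Lie algebra with natural symplectic product ⋆. Then the center satisfies Z(𝔤) = (𝔤⋆𝔤)^⊥ = { u : v⋆u = 0 for all v } = { u : u⋆v = v⋆u = 0 for all v } = { u ∈ [𝔤,𝔤]^⊥ : u⋆v = 0 for all v }. -/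
/-!
Both `ω(v ⋆ u, w)` and `ω(u, v ⋆ w)` are multiples of `ω([v,u],w) + ω([v,w],u)`. If this
expression vanishes for all `v, w`, then closedness of `ω` (with the roles of `v` and `w`
exchanged) forces `ω([v,w],u) = 0`, hence `ω([v,u],w) = 0` and `u` is central by
non-degeneracy. Conversely, closedness makes a central `u` orthogonal to `[𝔤,𝔤]`.
-/

section QuasiFrobenius

variable {K L : Type*} [Field K] [LieRing L] [LieAlgebra K L] {ω : L →ₗ[K] L →ₗ[K] K}

/-- `3 ω(v ⋆ u, w)` vanishes for all `v, w`, written without `⋆`. -/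
def IsStarAnnihilated (ω : L →ₗ[K] L →ₗ[K] K) (u : L) : Prop :=
  ∀ v w : L, ω ⁅v, u⁆ w + ω ⁅v, w⁆ u = 0

theorem form_lie_swap_s13 (ω : L →ₗ[K] L →ₗ[K] K) (x y w : L) :
    ω ⁅x, y⁆ w = -ω ⁅y, x⁆ w := by
  rw [← lie_skew, map_neg, LinearMap.neg_apply]

theorem form_lie_eq_zero_of_forall_lie_eq_zero
    (hclosed : ∀ u v w : L, ω ⁅u, v⁆ w + ω ⁅v, w⁆ u + ω ⁅w, u⁆ v = 0)
    {u : L} (hu : ∀ v : L, ⁅u, v⁆ = 0) (v w : L) : ω ⁅v, w⁆ u = 0 := by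
  simpa [hu v, ← lie_skew w u, hu w] using hclosed u v w

theorem forall_lie_eq_zero_iff_isStarAnnihilated [CharZero K]
    (hnd : ∀ u : L, (∀ v : L, ω u v = 0) → u = 0)
    (hclosed : ∀ u v w : L, ω ⁅u, v⁆ w + ω ⁅v, w⁆ u + ω ⁅w, u⁆ v = 0) {u : L} :
    (∀ v : L, ⁅u, v⁆ = 0) ↔ IsStarAnnihilated ω u := by
  constructor
  · intro hu v w
    rw [← lie_skew, hu, neg_zero, map_zero, LinearMap.zero_apply, zero_add,
      form_lie_eq_zero_of_forall_lie_eq_zero hclosed hu]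
  · intro h v
    suffices hvu : ⁅v, u⁆ = 0 by rw [← lie_skew, hvu, neg_zero]
    refine hnd _ fun w => ?_
    have hcl := hclosed u v w
    rw [form_lie_swap_s13 ω u v] at hcl
    linear_combination (-1/3 : K) * hcl + (2/3 : K) * h v w + (1/3 : K) * h w v
      - (1/3 : K) * form_lie_swap_s13 ω w v u

variable {s : L →ₗ[K] L →ₗ[K] L}

theorem forall_star_eq_zero_iff_isStarAnnihilated [CharZero K]
    (hnd : ∀ u : L, (∀ v : L, ω u v = 0) → u = 0)
    (hs : ∀ u v w : L, ω (s u v) w = (1/3 : K) * (ω ⁅u, v⁆ w + ω ⁅u, w⁆ v)) {u : L} :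
    (∀ v : L, s v u = 0) ↔ IsStarAnnihilated ω u := by
  refine forall_congr' fun v => ⟨fun h w => ?_, fun h => hnd _ fun w => ?_⟩
  · have hsvu := hs v u w
    rw [h, map_zero, LinearMap.zero_apply] at hsvu
    linear_combination (-3 : K) * hsvu
  · rw [hs, h, mul_zero]

theorem forall_form_star_eq_zero_iff_isStarAnnihilated [CharZero K]
    (hskew : ∀ u v : L, ω u v = - ω v u)
    (hs : ∀ u v w : L, ω (s u v) w = (1/3 : K) * (ω ⁅u, v⁆ w + ω ⁅u, w⁆ v)) {u : L} :
    (∀ v w : L, ω u (s v w) = 0) ↔ IsStarAnnihilated ω u := by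
  refine forall_congr' fun v => forall_congr' fun w => ?_
  rw [hskew, hs, neg_eq_zero, mul_eq_zero, add_comm]
  norm_num

theorem star_eq_zero_of_forall_lie_eq_zero
    (hnd : ∀ u : L, (∀ v : L, ω u v = 0) → u = 0)
    (hs : ∀ u v w : L, ω (s u v) w = (1/3 : K) * (ω ⁅u, v⁆ w + ω ⁅u, w⁆ v))
    {u : L} (hu : ∀ v : L, ⁅u, v⁆ = 0) (v : L) : s u v = 0 :=
  hnd _ fun w => by simp [hs, hu]

theorem forall_lie_eq_zero_of_form_lie_eq_zero_of_star_eq_zero [CharZero K]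
    (hskew : ∀ u v : L, ω u v = - ω v u)
    (hnd : ∀ u : L, (∀ v : L, ω u v = 0) → u = 0)
    (hclosed : ∀ u v w : L, ω ⁅u, v⁆ w + ω ⁅v, w⁆ u + ω ⁅w, u⁆ v = 0)
    (hs : ∀ u v w : L, ω (s u v) w = (1/3 : K) * (ω ⁅u, v⁆ w + ω ⁅u, w⁆ v))
    {u : L} (horth : ∀ v w : L, ω u ⁅v, w⁆ = 0) (hsu : ∀ v : L, s u v = 0) (v : L) :
    ⁅u, v⁆ = 0 := by
  refine hnd _ fun w => ?_
  have hsuv := hs u v w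
  rw [hsu, map_zero, LinearMap.zero_apply] at hsuv
  have hvwu : ω ⁅v, w⁆ u = 0 := by rw [hskew, horth, neg_zero]
  linear_combination (1/2 : K) * hclosed u v w - (1/2 : K) * hvwu
    - (1/2 : K) * form_lie_swap_s13 ω w u v - (3/2 : K) * hsuv

end QuasiFrobenius

/-- Characterizations of the center of a quasi-Frobenius Lie algebra
in terms of its natural symplectic product. -/
theorem stmt13 {K L : Type*} [Field K] [CharZero K] [LieRing L] [LieAlgebra K L]
    (ω : L →ₗ[K] L →ₗ[K] K)
    (hskew : ∀ u v, ω u v = - ω v u)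
    (hnd : ∀ u, (∀ v, ω u v = 0) → u = 0)
    (hclosed : ∀ u v w, ω ⁅u, v⁆ w + ω ⁅v, w⁆ u + ω ⁅w, u⁆ v = 0)
    (s : L →ₗ[K] L →ₗ[K] L)
    (hs : ∀ u v w, ω (s u v) w = (1/3 : K) * (ω ⁅u, v⁆ w + ω ⁅u, w⁆ v)) :
    ({u : L | ∀ v : L, ⁅u, v⁆ = 0} = {u : L | ∀ v w : L, ω u (s v w) = 0}) ∧
    ({u : L | ∀ v : L, ⁅u, v⁆ = 0} = {u : L | ∀ v : L, s v u = 0}) ∧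
    ({u : L | ∀ v : L, ⁅u, v⁆ = 0} = {u : L | ∀ v : L, s u v = 0 ∧ s v u = 0}) ∧
    ({u : L | ∀ v : L, ⁅u, v⁆ = 0} =
      {u : L | (∀ v w : L, ω u ⁅v, w⁆ = 0) ∧ ∀ v : L, s u v = 0}) := by
  have center_iff (u : L) : (∀ v : L, ⁅u, v⁆ = 0) ↔ IsStarAnnihilated ω u :=
    forall_lie_eq_zero_iff_isStarAnnihilated hnd hclosed
  have center_iff_star (u : L) : (∀ v : L, ⁅u, v⁆ = 0) ↔ ∀ v, s v u = 0 := by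
    rw [center_iff, forall_star_eq_zero_iff_isStarAnnihilated hnd hs]
  refine ⟨?_, ?_, ?_, ?_⟩ <;> ext u <;> simp only [Set.mem_ofPred_eq]
  · rw [center_iff, forall_form_star_eq_zero_iff_isStarAnnihilated hskew hs]
  · exact center_iff_star u
  · rw [forall_and]
    exact ⟨fun hu => ⟨star_eq_zero_of_forall_lie_eq_zero hnd hs hu, (center_iff_star u).1 hu⟩,
      fun h => (center_iff_star u).2 h.2⟩
  · refine ⟨fun hu => ⟨fun v w => ?_, star_eq_zero_of_forall_lie_eq_zero hnd hs hu⟩,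
      fun h => ?_⟩
    · rw [hskew, form_lie_eq_zero_of_forall_lie_eq_zero hclosed hu, neg_zero]
    · exact forall_lie_eq_zero_of_form_lie_eq_zero_of_star_eq_zero hskew hnd hclosed hs h.1 h.2
end

section
/- Let (𝔤, [·,·], ω) be a flat quasi-Frobenius Lie algebra, i.e., the natural symplectic product ⋆ (given by ω(u⋆v,w) = (1/3)(ω([u,v],w) + ω([u,w],v))) is left-symmetric. Then for all u, v ∈ [𝔤,𝔤]^⊥ one has ad_u ∘ ad_v = 0; in particular ad_u² = 0 for every u ∈ [𝔤,𝔤]^⊥. -/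
/-!
On `[𝔤,𝔤]^⊥` the product `⋆` is determined by the bracket: closedness of `ω` gives
`u ⋆ x = (2/3) ad_u x` and `x ⋆ u = -(1/3) ad_u x`, and it also forces `[u,v] = 0` for
`u, v ∈ [𝔤,𝔤]^⊥`. Feeding this into the flatness identity for `L⋆_{[u,w]}` applied to `v`
and using Jacobi leaves `(1/9) [u,[w,v]] = 0`.
-/

section QuasiFrobenius

variable {K L : Type*} [Field K] [LieRing L] [LieAlgebra K L]

theorem eq_of_forall_apply_eq_of_separatingLeft {ω : L →ₗ[K] L →ₗ[K] K}
    (hnd : ω.SeparatingLeft) {x y : L} (h : ∀ w, ω x w = ω y w) : x = y :=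
  LinearMap.ker_eq_bot.mp (LinearMap.separatingLeft_iff_ker_eq_bot.mp hnd) (LinearMap.ext h)

variable (ω : L →ₗ[K] L →ₗ[K] K)

theorem apply_lie_swap_of_perp_derived (hskew : ∀ u v : L, ω u v = - ω v u)
    (hclosed : ∀ u v w : L, ω ⁅u, v⁆ w + ω ⁅v, w⁆ u + ω ⁅w, u⁆ v = 0)
    {u : L} (hu : ∀ a b : L, ω u ⁅a, b⁆ = 0) (x w : L) :
    ω ⁅u, x⁆ w = ω ⁅u, w⁆ x := by
  have hxw : ω ⁅x, w⁆ u = 0 := by rw [hskew, hu, neg_zero]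
  have hwu : ω ⁅w, u⁆ x = - ω ⁅u, w⁆ x := by
    rw [← lie_skew, map_neg, LinearMap.neg_apply]
  linear_combination hclosed u x w - hxw - hwu

theorem lie_eq_zero_of_perp_derived (hskew : ∀ u v : L, ω u v = - ω v u)
    (hnd : ω.SeparatingLeft)
    (hclosed : ∀ u v w : L, ω ⁅u, v⁆ w + ω ⁅v, w⁆ u + ω ⁅w, u⁆ v = 0)
    {u v : L} (hu : ∀ a b : L, ω u ⁅a, b⁆ = 0) (hv : ∀ a b : L, ω v ⁅a, b⁆ = 0) :
    ⁅u, v⁆ = 0 := by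
  refine eq_of_forall_apply_eq_of_separatingLeft hnd fun w => ?_
  have hvw : ω ⁅v, w⁆ u = 0 := by rw [hskew, hu, neg_zero]
  have hwu : ω ⁅w, u⁆ v = 0 := by rw [hskew, hv, neg_zero]
  simpa [hvw, hwu] using hclosed u v w

variable (s : L →ₗ[K] L →ₗ[K] L)

theorem apply_perp_derived_left (hskew : ∀ u v : L, ω u v = - ω v u)
    (hnd : ω.SeparatingLeft)
    (hclosed : ∀ u v w : L, ω ⁅u, v⁆ w + ω ⁅v, w⁆ u + ω ⁅w, u⁆ v = 0)
    (hs : ∀ u v w : L, ω (s u v) w = (1/3 : K) * (ω ⁅u, v⁆ w + ω ⁅u, w⁆ v))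
    {u : L} (hu : ∀ a b : L, ω u ⁅a, b⁆ = 0) (x : L) :
    s u x = (2/3 : K) • ⁅u, x⁆ := by
  refine eq_of_forall_apply_eq_of_separatingLeft hnd fun w => ?_
  rw [hs, ← apply_lie_swap_of_perp_derived ω hskew hclosed hu x w, map_smul,
    LinearMap.smul_apply, smul_eq_mul]
  ring

theorem apply_perp_derived_right (hskew : ∀ u v : L, ω u v = - ω v u)
    (hnd : ω.SeparatingLeft)
    (hs : ∀ u v w : L, ω (s u v) w = (1/3 : K) * (ω ⁅u, v⁆ w + ω ⁅u, w⁆ v))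
    {v : L} (hv : ∀ a b : L, ω v ⁅a, b⁆ = 0) (x : L) :
    s x v = (1/3 : K) • ⁅x, v⁆ := by
  refine eq_of_forall_apply_eq_of_separatingLeft hnd fun w => ?_
  have hxw : ω ⁅x, w⁆ v = 0 := by rw [hskew, hv, neg_zero]
  rw [hs, hxw, add_zero, map_smul, LinearMap.smul_apply, smul_eq_mul]

theorem lie_lie_eq_zero_of_perp_derived [CharZero K] (hskew : ∀ u v : L, ω u v = - ω v u)
    (hnd : ω.SeparatingLeft)
    (hclosed : ∀ u v w : L, ω ⁅u, v⁆ w + ω ⁅v, w⁆ u + ω ⁅w, u⁆ v = 0)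
    (hs : ∀ u v w : L, ω (s u v) w = (1/3 : K) * (ω ⁅u, v⁆ w + ω ⁅u, w⁆ v))
    (hflat : ∀ u v w : L, s ⁅u, v⁆ w = s u (s v w) - s v (s u w))
    {u v : L} (hu : ∀ a b : L, ω u ⁅a, b⁆ = 0) (hv : ∀ a b : L, ω v ⁅a, b⁆ = 0) (w : L) :
    ⁅u, ⁅v, w⁆⁆ = 0 := by
  have left := apply_perp_derived_left ω s hskew hnd hclosed hs hu
  have right := apply_perp_derived_right ω s hskew hnd hs hv
  have huv : ⁅u, v⁆ = 0 := lie_eq_zero_of_perp_derived ω hskew hnd hclosed hu hv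
  have jacobi : ⁅⁅u, w⁆, v⁆ = ⁅u, ⁅w, v⁆⁆ := by rw [lie_lie, huv, lie_zero, sub_zero]
  have hflat_uwv : (1/3 : K) • ⁅u, ⁅w, v⁆⁆ = (2/9 : K) • ⁅u, ⁅w, v⁆⁆ := by
    have h := hflat u w v
    rw [right, right, jacobi, map_smul, left, left, huv, smul_zero, map_zero, sub_zero,
      smul_smul] at h
    rw [h]
    norm_num
  have hzero : ⁅u, ⁅w, v⁆⁆ = 0 := by
    have h := sub_eq_zero.mpr hflat_uwv
    rw [← sub_smul] at h
    norm_num at h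
    exact h
  rw [← lie_skew v w, lie_neg, hzero, neg_zero]

end QuasiFrobenius

/-- In a flat quasi-Frobenius Lie algebra, `ad_u ∘ ad_v = 0` for all
`u, v ∈ [𝔤,𝔤]^⊥`; in particular `ad_u² = 0`. -/
theorem stmt14 {K L : Type*} [Field K] [CharZero K] [LieRing L] [LieAlgebra K L]
    (ω : L →ₗ[K] L →ₗ[K] K)
    (hskew : ∀ u v, ω u v = - ω v u)
    (hnd : ∀ u, (∀ v, ω u v = 0) → u = 0)
    (hclosed : ∀ u v w, ω ⁅u, v⁆ w + ω ⁅v, w⁆ u + ω ⁅w, u⁆ v = 0)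
    (s : L →ₗ[K] L →ₗ[K] L)
    (hs : ∀ u v w, ω (s u v) w = (1/3 : K) * (ω ⁅u, v⁆ w + ω ⁅u, w⁆ v))
    (hflat : ∀ u v w, s ⁅u, v⁆ w = s u (s v w) - s v (s u w)) :
    (∀ u v : L, (∀ a b : L, ω u ⁅a, b⁆ = 0) → (∀ a b : L, ω v ⁅a, b⁆ = 0) →
      ∀ w : L, ⁅u, ⁅v, w⁆⁆ = 0) ∧
    (∀ u : L, (∀ a b : L, ω u ⁅a, b⁆ = 0) → ∀ w : L, ⁅u, ⁅u, w⁆⁆ = 0) := by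
  have ad_comp_ad : ∀ u v : L, (∀ a b : L, ω u ⁅a, b⁆ = 0) → (∀ a b : L, ω v ⁅a, b⁆ = 0) →
      ∀ w : L, ⁅u, ⁅v, w⁆⁆ = 0 := fun _ _ hu hv =>
    lie_lie_eq_zero_of_perp_derived ω s hskew hnd hclosed hs hflat hu hv
  exact ⟨ad_comp_ad, fun u hu => ad_comp_ad u u hu hu⟩
end

section
/- Let (𝔤, [·,·], ω) be a flat quasi-Frobenius Lie algebra with natural symplectic product ⋆. Then the left annihilator N_ℓ(𝔤,⋆) = { u : u⋆v = 0 for all v } is a two-sided ideal of (𝔤, ⋆), and [𝔤, [𝔤,𝔤]^⊥] ⊆ N_ℓ(𝔤,⋆). -/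
/-!
Write `L_u = s u` and let `*` denote the `ω`-adjoint, so that the formula for `s` reads
`L_u = (ad_u - ad_u*) / 3`.

If `L_u = 0`, then `ad_u* = ad_u`, and closedness of `ω` turns this into `L_v u = [v, u]`;
flatness then gives `L_{[v,u]} = [L_v, L_u] = 0`.

If `v ⊥ [𝔤, 𝔤]`, closedness gives `ad_v* = -ad_v`, so `L_v = (2/3) ad_v`, and the formula
for `L` gives `L_{[u,v]} = [L_u, ad_v]` even without flatness. Flatness gives
`L_{[u,v]} = [L_u, L_v] = (2/3) L_{[u,v]}`, hence `L_{[u,v]} = 0`.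
-/

namespace QuasiFrobenius

variable {K L : Type*} [LieRing L]

section Form

variable [CommRing K] [LieAlgebra K L] (ω : L →ₗ[K] L →ₗ[K] K)

def derivedOrthogonal : Set L := {v | ∀ a b : L, ω v ⁅a, b⁆ = 0}

theorem apply_lie_swap (x y z : L) : ω ⁅x, y⁆ z = -ω ⁅y, x⁆ z := by
  rw [← lie_skew, map_neg, LinearMap.neg_apply]

variable {ω}

theorem eq_of_forall_apply_eq (hnd : ω.SeparatingLeft) {x y : L} (h : ∀ w, ω x w = ω y w) :
    x = y :=
  sub_eq_zero.mp <| hnd _ fun w => by rw [map_sub, LinearMap.sub_apply, h, sub_self]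

theorem apply_lie_comm_of_mem_derivedOrthogonal (hskew : ∀ u v, ω u v = -ω v u)
    (hclosed : ∀ u v w, ω ⁅u, v⁆ w + ω ⁅v, w⁆ u + ω ⁅w, u⁆ v = 0)
    {v : L} (hv : v ∈ derivedOrthogonal ω) (x y : L) : ω ⁅v, x⁆ y = ω ⁅v, y⁆ x := by
  have hxy : ω ⁅x, y⁆ v = 0 := by rw [hskew, hv, neg_zero]
  linear_combination hclosed v x y - hxy - apply_lie_swap ω y v x

theorem apply_lie_lie_of_mem_derivedOrthogonal (hskew : ∀ u v, ω u v = -ω v u)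
    (hclosed : ∀ u v w, ω ⁅u, v⁆ w + ω ⁅v, w⁆ u + ω ⁅w, u⁆ v = 0)
    {v : L} (hv : v ∈ derivedOrthogonal ω) (u w x : L) :
    ω ⁅⁅u, v⁆, w⁆ x = ω ⁅u, ⁅v, w⁆⁆ x + ω ⁅u, w⁆ ⁅v, x⁆ := by
  rw [lie_lie, map_sub, LinearMap.sub_apply,
    apply_lie_comm_of_mem_derivedOrthogonal hskew hclosed hv, hskew ⁅v, x⁆, sub_neg_eq_add]

end Form

variable [Field K] [CharZero K] [LieAlgebra K L]
  {ω : L →ₗ[K] L →ₗ[K] K} {s : L →ₗ[K] L →ₗ[K] L}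

variable (s) in
def leftAnnihilator : Set L := {u | ∀ v, s u v = 0}

theorem apply_eq_lie_of_mem_leftAnnihilator
    (hnd : ω.SeparatingLeft)
    (hclosed : ∀ u v w, ω ⁅u, v⁆ w + ω ⁅v, w⁆ u + ω ⁅w, u⁆ v = 0)
    (hs : ∀ u v w, ω (s u v) w = (1/3 : K) * (ω ⁅u, v⁆ w + ω ⁅u, w⁆ v))
    {u : L} (hu : u ∈ leftAnnihilator s) (v : L) : s v u = ⁅v, u⁆ := by
  have had_u : ∀ x y, ω ⁅u, x⁆ y + ω ⁅u, y⁆ x = 0 := fun x y => by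
    have h := hs u x y
    rw [hu x, map_zero, LinearMap.zero_apply] at h
    exact (mul_eq_zero.mp h.symm).resolve_left (by norm_num)
  refine eq_of_forall_apply_eq hnd fun w => ?_
  linear_combination hs v u w + (1/3 : K) * hclosed u v w + (1/3 : K) * had_u v w
    - (1/3 : K) * apply_lie_swap ω w u v - (2/3 : K) * apply_lie_swap ω v u w

theorem apply_mem_leftAnnihilator
    (hnd : ω.SeparatingLeft)
    (hclosed : ∀ u v w, ω ⁅u, v⁆ w + ω ⁅v, w⁆ u + ω ⁅w, u⁆ v = 0)
    (hs : ∀ u v w, ω (s u v) w = (1/3 : K) * (ω ⁅u, v⁆ w + ω ⁅u, w⁆ v))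
    (hflat : ∀ u v w, s ⁅u, v⁆ w = s u (s v w) - s v (s u w))
    {u : L} (hu : u ∈ leftAnnihilator s) (v : L) : s v u ∈ leftAnnihilator s := fun w => by
  rw [apply_eq_lie_of_mem_leftAnnihilator hnd hclosed hs hu, hflat, hu, hu, map_zero, sub_zero]

theorem apply_eq_smul_lie_of_mem_derivedOrthogonal (hskew : ∀ u v, ω u v = -ω v u)
    (hnd : ω.SeparatingLeft)
    (hclosed : ∀ u v w, ω ⁅u, v⁆ w + ω ⁅v, w⁆ u + ω ⁅w, u⁆ v = 0)
    (hs : ∀ u v w, ω (s u v) w = (1/3 : K) * (ω ⁅u, v⁆ w + ω ⁅u, w⁆ v))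
    {v : L} (hv : v ∈ derivedOrthogonal ω) (x : L) : s v x = (2/3 : K) • ⁅v, x⁆ := by
  refine eq_of_forall_apply_eq hnd fun y => ?_
  rw [map_smul, LinearMap.smul_apply, smul_eq_mul]
  linear_combination
    hs v x y - (1/3 : K) * apply_lie_comm_of_mem_derivedOrthogonal hskew hclosed hv x y

theorem apply_lie_eq_of_mem_derivedOrthogonal (hskew : ∀ u v, ω u v = -ω v u)
    (hnd : ω.SeparatingLeft)
    (hclosed : ∀ u v w, ω ⁅u, v⁆ w + ω ⁅v, w⁆ u + ω ⁅w, u⁆ v = 0)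
    (hs : ∀ u v w, ω (s u v) w = (1/3 : K) * (ω ⁅u, v⁆ w + ω ⁅u, w⁆ v))
    {v : L} (hv : v ∈ derivedOrthogonal ω) (u w : L) :
    s ⁅u, v⁆ w = s u ⁅v, w⁆ - ⁅v, s u w⁆ := by
  refine eq_of_forall_apply_eq hnd fun x => ?_
  rw [map_sub, LinearMap.sub_apply, apply_lie_comm_of_mem_derivedOrthogonal hskew hclosed hv,
    hskew ⁅v, x⁆]
  linear_combination hs ⁅u, v⁆ w x - hs u ⁅v, w⁆ x - hs u w ⁅v, x⁆
    + (1/3 : K) * apply_lie_lie_of_mem_derivedOrthogonal hskew hclosed hv u w x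
    + (1/3 : K) * apply_lie_lie_of_mem_derivedOrthogonal hskew hclosed hv u x w

theorem apply_lie_eq_zero_of_mem_derivedOrthogonal (hskew : ∀ u v, ω u v = -ω v u)
    (hnd : ω.SeparatingLeft)
    (hclosed : ∀ u v w, ω ⁅u, v⁆ w + ω ⁅v, w⁆ u + ω ⁅w, u⁆ v = 0)
    (hs : ∀ u v w, ω (s u v) w = (1/3 : K) * (ω ⁅u, v⁆ w + ω ⁅u, w⁆ v))
    (hflat : ∀ u v w, s ⁅u, v⁆ w = s u (s v w) - s v (s u w))
    {v : L} (hv : v ∈ derivedOrthogonal ω) (u w : L) : s ⁅u, v⁆ w = 0 := by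
  have hL_v := apply_eq_smul_lie_of_mem_derivedOrthogonal hskew hnd hclosed hs hv
  have hthird : s ⁅u, v⁆ w = (2/3 : K) • s ⁅u, v⁆ w :=
    calc s ⁅u, v⁆ w = s u (s v w) - s v (s u w) := hflat u v w
      _ = (2/3 : K) • (s u ⁅v, w⁆ - ⁅v, s u w⁆) := by rw [hL_v, hL_v, map_smul, smul_sub]
      _ = (2/3 : K) • s ⁅u, v⁆ w := by
        rw [apply_lie_eq_of_mem_derivedOrthogonal hskew hnd hclosed hs hv]
  have h : (1/3 : K) • s ⁅u, v⁆ w = 0 := by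
    rw [show (1/3 : K) = 1 - 2/3 by norm_num, sub_smul, one_smul, ← hthird, sub_self]
  exact (smul_eq_zero.mp h).resolve_left (by norm_num)

end QuasiFrobenius

open QuasiFrobenius in
/-- In a flat quasi-Frobenius Lie algebra, the left annihilator
`N_ℓ(𝔤,⋆) = { u : u⋆v = 0 ∀v }` is a two-sided ideal of `(𝔤,⋆)` and contains
`[𝔤, [𝔤,𝔤]^⊥]`. -/
theorem stmt15 {K L : Type*} [Field K] [CharZero K] [LieRing L] [LieAlgebra K L]
    (ω : L →ₗ[K] L →ₗ[K] K)
    (hskew : ∀ u v, ω u v = - ω v u)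
    (hnd : ∀ u, (∀ v, ω u v = 0) → u = 0)
    (hclosed : ∀ u v w, ω ⁅u, v⁆ w + ω ⁅v, w⁆ u + ω ⁅w, u⁆ v = 0)
    (s : L →ₗ[K] L →ₗ[K] L)
    (hs : ∀ u v w, ω (s u v) w = (1/3 : K) * (ω ⁅u, v⁆ w + ω ⁅u, w⁆ v))
    (hflat : ∀ u v w, s ⁅u, v⁆ w = s u (s v w) - s v (s u w)) :
    (∀ u : L, (∀ v, s u v = 0) →
      ∀ v : L, (∀ w, s (s u v) w = 0) ∧ (∀ w, s (s v u) w = 0)) ∧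
    (∀ u v : L, (∀ a b : L, ω v ⁅a, b⁆ = 0) → ∀ w : L, s ⁅u, v⁆ w = 0) := by
  refine ⟨fun u hu v => ⟨fun w => ?_, apply_mem_leftAnnihilator hnd hclosed hs hflat hu v⟩,
    fun u v hv => apply_lie_eq_zero_of_mem_derivedOrthogonal hskew hnd hclosed hs hflat hv u⟩
  rw [hu v, map_zero, LinearMap.zero_apply]
end

section
/- Every 2-dimensional flat quasi-Frobenius Lie superalgebra over a field of characteristic zero is abelian. In particular, in the periplectic case with basis {a | b} (a even central, b odd, ω(a,b)=1), the closedness of ω forces [b,b] = 0. -/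
/-!
If `𝔤` is purely odd, every bracket lands in `𝔤₀ = 0`. If `𝔤` is purely even, `ω` is a symplectic
form on a plane, so `[x, y] = ω(x, y) t` for a fixed `t`; the left-symmetry identity for
`(t, z, z)`, paired with `z`, reads `ω(t, z)³ = 0`, so `t = 0`.

In dimension `(1|1)` an even form is degenerate, so `ω` is odd and pairs `𝔤₀ = K a` with
`𝔤₁ = K b`. The even bracket vanishes by antisymmetry, closedness gives `3 ω([b, b], b) = 0` and
hence `[b, b] = 0`, and writing `[a, b] = μ b` the products `a ⋆ b`, `b ⋆ a`, `a ⋆ a` are the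
multiples `μ/3`, `-2μ/3`, `-μ/3` of the basis vectors; the left-symmetry identity for
`(a, b, a)` then reads `μ² ω(a, b) = 0`.
-/

open Module

section Bilinear

variable {K V V' W : Type*} [Field K] [AddCommGroup V] [Module K V] [AddCommGroup V'] [Module K V']
  [AddCommGroup W] [Module K W]

theorem LinearMap.isAlt_of_apply_eq_neg [CharZero K] {B : V →ₗ[K] V →ₗ[K] W}
    (hB : ∀ x y, B x y = -B y x) : B.IsAlt := fun x => by
  have h : (2 : K) • B x x = 0 := by
    rw [two_smul]
    nth_rewrite 1 [hB]
    exact neg_add_cancel _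
  simpa using h

theorem eq_smul_of_finrank_eq_one (hV : finrank K V = 1) (φ : V →ₗ[K] K) {v x : V} {a : K}
    (hv : φ v ≠ 0) (h : φ x = a * φ v) : x = a • v := by
  have hv0 : v ≠ 0 := by
    rintro rfl
    simp at hv
  obtain ⟨c, rfl⟩ := (finrank_eq_one_iff_of_nonzero' v hv0).mp hV x
  rw [map_smul, smul_eq_mul] at h
  rw [mul_right_cancel₀ hv h]

theorem LinearMap.eq_zero_of_finrank_eq_one (B : V →ₗ[K] V' →ₗ[K] W) (hV : finrank K V = 1)
    (hV' : finrank K V' = 1) {v : V} {v' : V'} (hv : v ≠ 0) (hv' : v' ≠ 0) (h : B v v' = 0) :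
    B = 0 := by
  ext x y
  obtain ⟨a, rfl⟩ := (finrank_eq_one_iff_of_nonzero' v hv).mp hV x
  obtain ⟨b, rfl⟩ := (finrank_eq_one_iff_of_nonzero' v' hv').mp hV' y
  simp [h]

theorem LinearMap.IsAlt.eq_zero_of_finrank_eq_one {B : V →ₗ[K] V →ₗ[K] W} (hB : B.IsAlt)
    (hV : finrank K V = 1) : B = 0 := by
  have := nontrivial_of_finrank_eq_succ hV
  obtain ⟨v, hv⟩ := exists_ne (0 : V)
  exact B.eq_zero_of_finrank_eq_one hV hV hv hv (hB v)

theorem LinearMap.IsAlt.exists_eq_smul_of_finrank_eq_two {B : V →ₗ[K] V →ₗ[K] W}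
    {ω : V →ₗ[K] V →ₗ[K] K} (hB : B.IsAlt) (hω : ω.IsAlt) (hnd : ω.SeparatingLeft)
    (hV : finrank K V = 2) : ∃ t : W, ∀ x y, B x y = ω x y • t := by
  have := finite_of_finrank_eq_succ hV
  let b := finBasisOfFinrankEq K V hV
  have hc : ω (b 0) (b 1) ≠ 0 := by
    intro hc
    have h : ω (b 0) = 0 := b.ext fun i => by fin_cases i <;> simp [hω.self_eq_zero, hc]
    exact b.ne_zero 0 (hnd _ fun y => by simp [h])
  set t := (ω (b 0) (b 1))⁻¹ • B (b 0) (b 1)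
  have hBt : B (b 0) (b 1) = ω (b 0) (b 1) • t := by simp [t, smul_smul, hc]
  have h : B = ω.compr₂ (toSpanSingleton K W t) :=
    ext_basis b b fun i j => by
      fin_cases i <;> fin_cases j
      · simp [hB.self_eq_zero, hω.self_eq_zero]
      · simp [hBt]
      · simp only [Fin.mk_one, Fin.zero_eta, compr₂_apply, toSpanSingleton_apply]
        rw [← hB.neg, ← hω.neg, hBt, neg_smul]
      · simp [hB.self_eq_zero, hω.self_eq_zero]
  exact ⟨t, fun x y => by rw [h]; rfl⟩

end Bilinear

section QuasiFrobenius

variable {K V V0 V1 : Type*} [Field K] [CharZero K] [AddCommGroup V] [Module K V]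
  [AddCommGroup V0] [Module K V0] [AddCommGroup V1] [Module K V1]

theorem eq_zero_of_flat_of_bracket_eq_smul {ω : V →ₗ[K] V →ₗ[K] K} (hω : ω.IsAlt)
    (hnd : ω.SeparatingLeft) {b s : V →ₗ[K] V →ₗ[K] V} {t : V} (hb : ∀ x y, b x y = ω x y • t)
    (hs : ∀ x y z, ω (s x y) z = (1/3 : K) * (ω (b x y) z + ω (b x z) y))
    (hflat : ∀ x y z, s (s x y) z - s x (s y z) = s (s y x) z - s y (s x z)) : t = 0 := by
  have hs_left : ∀ x y z, ω (s x y) z = (1/3 : K) * (ω x y * ω t z + ω x z * ω t y) := by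
    intro x y z
    simp only [hs, hb, map_smul, LinearMap.smul_apply, smul_eq_mul]
  have hs_right : ∀ x y z, ω z (s x y) = -((1/3 : K) * (ω x y * ω t z + ω x z * ω t y)) := by
    intro x y z
    rw [← hω.neg, hs_left]
  refine hnd t fun z => ?_
  have h := congrArg (fun p => ω p z) (hflat t z z)
  simp only [map_sub, LinearMap.sub_apply, hs_left, hs_right, hω.self_eq_zero] at h
  have h3 : ω t z ^ 3 = 0 := by linear_combination (9/2 : K) * h
  exact pow_eq_zero_iff three_ne_zero |>.mp h3

theorem odd_bracket_eq_zero_of_finrank_eq_one (h0 : finrank K V0 = 1) (h1 : finrank K V1 = 1)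
    {ω01 : V0 →ₗ[K] V1 →ₗ[K] K} {e : V0} {f : V1} (hc : ω01 e f ≠ 0)
    {b2 : V1 →ₗ[K] V1 →ₗ[K] V0}
    (hclosed : ∀ u v w, ω01 (b2 u v) w + ω01 (b2 v w) u + ω01 (b2 w u) v = 0) : b2 = 0 := by
  have hf : f ≠ 0 := by
    rintro rfl
    simp at hc
  have h3 : (3 : K) * ω01 (b2 f f) f = 0 := by linear_combination hclosed f f f
  have hff : b2 f f = (0 : K) • e :=
    eq_smul_of_finrank_eq_one h0 (ω01.flip f) hc (by simpa using h3)
  exact b2.eq_zero_of_finrank_eq_one h1 h1 hf hf (by simpa using hff)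

theorem mixed_bracket_eq_zero_of_flat (h0 : finrank K V0 = 1) (h1 : finrank K V1 = 1)
    {ω01 : V0 →ₗ[K] V1 →ₗ[K] K} {ω10 : V1 →ₗ[K] V0 →ₗ[K] K} (hω01 : ∀ x u, ω10 u x = - ω01 x u)
    {e : V0} {f : V1} (hc : ω01 e f ≠ 0)
    {b0 : V0 →ₗ[K] V0 →ₗ[K] V0} (hb0 : b0 = 0) {b1 : V0 →ₗ[K] V1 →ₗ[K] V1}
    {s00 : V0 →ₗ[K] V0 →ₗ[K] V0} {s01 : V0 →ₗ[K] V1 →ₗ[K] V1} {s10 : V1 →ₗ[K] V0 →ₗ[K] V1}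
    (d001 : ∀ x y u, ω01 (s00 x y) u = (1/3 : K) * (ω01 (b0 x y) u + ω10 (b1 x u) y))
    (d010 : ∀ x u z, ω10 (s01 x u) z = (1/3 : K) * (ω10 (b1 x u) z + ω01 (b0 x z) u))
    (d100 : ∀ u y z, ω10 (s10 u y) z = (1/3 : K) * (- ω10 (b1 y u) z - ω10 (b1 z u) y))
    (f3 : ∀ x u z, s10 (s01 x u) z - s01 x (s10 u z) = s10 (s10 u x) z - s10 u (s00 x z)) :
    b1 = 0 := by
  subst hb0
  have he : e ≠ 0 := by
    rintro rfl
    simp at hc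
  have hf : f ≠ 0 := by
    rintro rfl
    simp at hc
  have hfe : ω10 f e = -ω01 e f := hω01 e f
  have hfe' : ω10.flip e f ≠ 0 := by simpa [hfe] using hc
  obtain ⟨μ, hμ⟩ := (finrank_eq_one_iff_of_nonzero' f hf).mp h1 (b1 e f)
  have hs01 : s01 e f = (μ / 3) • f := by
    refine eq_smul_of_finrank_eq_one h1 (ω10.flip e) hfe' ?_
    simp only [LinearMap.flip_apply, d010, ← hμ, map_smul, LinearMap.smul_apply,
      LinearMap.zero_apply, map_zero, smul_eq_mul]
    ring
  have hs10 : s10 f e = (-(2 * μ / 3)) • f := by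
    refine eq_smul_of_finrank_eq_one h1 (ω10.flip e) hfe' ?_
    simp only [LinearMap.flip_apply, d100, ← hμ, map_smul, LinearMap.smul_apply, smul_eq_mul]
    ring
  have hs00 : s00 e e = (-(μ / 3)) • e := by
    refine eq_smul_of_finrank_eq_one h0 (ω01.flip f) (by simpa using hc) ?_
    simp only [LinearMap.flip_apply, d001, ← hμ, map_smul, LinearMap.smul_apply,
      LinearMap.zero_apply, map_zero, smul_eq_mul, hfe]
    ring
  have h := congrArg (fun w => ω10 w e) (f3 e f e)
  simp only [hs01, hs10, hs00, map_sub, map_smul, LinearMap.sub_apply, LinearMap.smul_apply,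
    hfe, smul_eq_mul] at h
  have hμ0 : μ = 0 := by
    have h2 : μ ^ 2 * ω01 e f = 0 := by linear_combination (9/2 : K) * h
    exact pow_eq_zero_iff two_ne_zero |>.mp ((mul_eq_zero.mp h2).resolve_right hc)
  exact b1.eq_zero_of_finrank_eq_one h0 h1 he hf (by simp [← hμ, hμ0])

end QuasiFrobenius

theorem stmt18_general {K V0 V1 : Type*} [Field K] [CharZero K]
    [AddCommGroup V0] [Module K V0] [FiniteDimensional K V0]
    [AddCommGroup V1] [Module K V1] [FiniteDimensional K V1]
    (hdim : Module.finrank K V0 + Module.finrank K V1 = 2)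
    -- the super Lie bracket, by parity components
    (b0 : V0 →ₗ[K] V0 →ₗ[K] V0) (b1 : V0 →ₗ[K] V1 →ₗ[K] V1)
    (b2 : V1 →ₗ[K] V1 →ₗ[K] V0)
    (hb0 : ∀ x y, b0 x y = - b0 y x)
    -- the homogeneous anti-symmetric form, by parity components
    (ω00 : V0 →ₗ[K] V0 →ₗ[K] K) (ω01 : V0 →ₗ[K] V1 →ₗ[K] K)
    (ω10 : V1 →ₗ[K] V0 →ₗ[K] K) (ω11 : V1 →ₗ[K] V1 →ₗ[K] K)
    (hω00 : ∀ x y, ω00 x y = - ω00 y x)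
    (hω01 : ∀ x u, ω10 u x = - ω01 x u)
    (hhomog : (ω01 = 0 ∧ ω10 = 0) ∨ (ω00 = 0 ∧ ω11 = 0))
    (hnd : ∀ (x : V0) (u : V1),
      (∀ (y : V0) (v : V1), ω00 x y + ω01 x v + ω10 u y + ω11 u v = 0) →
      x = 0 ∧ u = 0)
    -- closedness of ω, by parity components
    (c111 : ∀ u v w, ω01 (b2 u v) w + ω01 (b2 v w) u + ω01 (b2 w u) v = 0)
    -- the natural symplectic product, by parity components
    (s00 : V0 →ₗ[K] V0 →ₗ[K] V0) (s01 : V0 →ₗ[K] V1 →ₗ[K] V1)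
    (s10 : V1 →ₗ[K] V0 →ₗ[K] V1)
    (d000 : ∀ x y z, ω00 (s00 x y) z = (1/3 : K) * (ω00 (b0 x y) z + ω00 (b0 x z) y))
    (d001 : ∀ x y u, ω01 (s00 x y) u = (1/3 : K) * (ω01 (b0 x y) u + ω10 (b1 x u) y))
    (d010 : ∀ x u z, ω10 (s01 x u) z = (1/3 : K) * (ω10 (b1 x u) z + ω01 (b0 x z) u))
    (d100 : ∀ u y z, ω10 (s10 u y) z = (1/3 : K) * (- ω10 (b1 y u) z - ω10 (b1 z u) y))
    -- flatness: the natural symplectic product is (super) left-symmetric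
    (f1 : ∀ x y z, s00 (s00 x y) z - s00 x (s00 y z) = s00 (s00 y x) z - s00 y (s00 x z))
    (f3 : ∀ x u z, s10 (s01 x u) z - s01 x (s10 u z) = s10 (s10 u x) z - s10 u (s00 x z)) :
    b0 = 0 ∧ b1 = 0 ∧ b2 = 0 ∧ ∀ u : V1, b2 u u = 0 := by
  have hb0alt := LinearMap.isAlt_of_apply_eq_neg hb0
  have hω00alt := LinearMap.isAlt_of_apply_eq_neg hω00
  suffices h : b0 = 0 ∧ b1 = 0 ∧ b2 = 0 from ⟨h.1, h.2.1, h.2.2, fun u => by simp [h.2.2]⟩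
  obtain h0 | ⟨h0, h1⟩ | h1 : finrank K V0 = 0 ∨ (finrank K V0 = 1 ∧ finrank K V1 = 1) ∨
      finrank K V1 = 0 := by omega
  · have := finrank_zero_iff.mp h0
    exact ⟨Subsingleton.elim _ _, by ext x; simp [Subsingleton.elim x 0], Subsingleton.elim _ _⟩
  · have := nontrivial_of_finrank_eq_succ h0
    obtain ⟨e, he⟩ := exists_ne (0 : V0)
    obtain ⟨h01, h10⟩ | ⟨h00, h11⟩ := hhomog
    · have h00 := hω00alt.eq_zero_of_finrank_eq_one h0
      exact absurd (hnd e 0 fun y v => by simp [h00, h01, h10]).1 he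
    · obtain ⟨f, hc⟩ : ∃ f, ω01 e f ≠ 0 := by
        by_contra! h
        exact he (hnd e 0 fun y v => by simp [h00, h11, h]).1
      have hb0' := hb0alt.eq_zero_of_finrank_eq_one h0
      exact ⟨hb0', mixed_bracket_eq_zero_of_flat h0 h1 hω01 hc hb0' d001 d010 d100 f3,
        odd_bracket_eq_zero_of_finrank_eq_one h0 h1 hc c111⟩
  · have := finrank_zero_iff.mp h1
    have hnd0 : ω00.SeparatingLeft := fun x hx =>
      (hnd x 0 fun y v => by simp [hx, Subsingleton.elim v 0]).1
    obtain ⟨t, ht⟩ := hb0alt.exists_eq_smul_of_finrank_eq_two hω00alt hnd0 (by omega)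
    have ht0 := eq_zero_of_flat_of_bracket_eq_smul hω00alt hnd0 ht d000 f1
    refine ⟨?_, Subsingleton.elim _ _, by ext u; simp [Subsingleton.elim u 0]⟩
    ext x y
    simp [ht, ht0]

/-- Every 2-dimensional flat quasi-Frobenius Lie superalgebra over a
field of characteristic zero is abelian.  The superalgebra `𝔤 = V0 ⊕ V1` is encoded
by the parity components of the bracket (`b0, b1, b2`), of the homogeneous
non-degenerate closed anti-symmetric form `ω` (`ω00, ω01, ω10, ω11`), and of the
natural symplectic product `s` (`s00, s01, s10, s11`), defined by
`ω(u⋆v,w) = (1/3)(ω([u,v],w) + (−1)^{|v||w|} ω([u,w],v))`; flatness is the super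
left-symmetry of `s`.  The conclusion is that all brackets vanish; in particular,
in the periplectic case, `[b,b] = 0` for every odd `b`. -/
theorem stmt18 {K V0 V1 : Type*} [Field K] [CharZero K]
    [AddCommGroup V0] [Module K V0] [FiniteDimensional K V0]
    [AddCommGroup V1] [Module K V1] [FiniteDimensional K V1]
    (hdim : Module.finrank K V0 + Module.finrank K V1 = 2)
    -- the super Lie bracket, by parity components
    (b0 : V0 →ₗ[K] V0 →ₗ[K] V0) (b1 : V0 →ₗ[K] V1 →ₗ[K] V1)
    (b2 : V1 →ₗ[K] V1 →ₗ[K] V0)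
    (hb0 : ∀ x y, b0 x y = - b0 y x)
    (hb2 : ∀ u v, b2 u v = b2 v u)
    (j000 : ∀ x y z, b0 x (b0 y z) = b0 (b0 x y) z + b0 y (b0 x z))
    (j001 : ∀ x y u, b1 (b0 x y) u = b1 x (b1 y u) - b1 y (b1 x u))
    (j011 : ∀ x u v, b0 x (b2 u v) = b2 (b1 x u) v + b2 u (b1 x v))
    (j111 : ∀ u v w, b1 (b2 u v) w + b1 (b2 v w) u + b1 (b2 w u) v = 0)
    -- the homogeneous anti-symmetric form, by parity components
    (ω00 : V0 →ₗ[K] V0 →ₗ[K] K) (ω01 : V0 →ₗ[K] V1 →ₗ[K] K)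
    (ω10 : V1 →ₗ[K] V0 →ₗ[K] K) (ω11 : V1 →ₗ[K] V1 →ₗ[K] K)
    (hω00 : ∀ x y, ω00 x y = - ω00 y x)
    (hω11 : ∀ u v, ω11 u v = ω11 v u)
    (hω01 : ∀ x u, ω10 u x = - ω01 x u)
    (hhomog : (ω01 = 0 ∧ ω10 = 0) ∨ (ω00 = 0 ∧ ω11 = 0))
    (hnd : ∀ (x : V0) (u : V1),
      (∀ (y : V0) (v : V1), ω00 x y + ω01 x v + ω10 u y + ω11 u v = 0) →
      x = 0 ∧ u = 0)
    -- closedness of ω, by parity components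
    (c000 : ∀ x y z, ω00 (b0 x y) z + ω00 (b0 y z) x + ω00 (b0 z x) y = 0)
    (c001 : ∀ x y u, ω01 (b0 x y) u + ω10 (b1 y u) x - ω10 (b1 x u) y = 0)
    (c011 : ∀ x u v, ω11 (b1 x u) v + ω00 (b2 u v) x + ω11 (b1 x v) u = 0)
    (c111 : ∀ u v w, ω01 (b2 u v) w + ω01 (b2 v w) u + ω01 (b2 w u) v = 0)
    -- the natural symplectic product, by parity components
    (s00 : V0 →ₗ[K] V0 →ₗ[K] V0) (s01 : V0 →ₗ[K] V1 →ₗ[K] V1)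
    (s10 : V1 →ₗ[K] V0 →ₗ[K] V1) (s11 : V1 →ₗ[K] V1 →ₗ[K] V0)
    (d000 : ∀ x y z, ω00 (s00 x y) z = (1/3 : K) * (ω00 (b0 x y) z + ω00 (b0 x z) y))
    (d001 : ∀ x y u, ω01 (s00 x y) u = (1/3 : K) * (ω01 (b0 x y) u + ω10 (b1 x u) y))
    (d010 : ∀ x u z, ω10 (s01 x u) z = (1/3 : K) * (ω10 (b1 x u) z + ω01 (b0 x z) u))
    (d011 : ∀ x u v, ω11 (s01 x u) v = (1/3 : K) * (ω11 (b1 x u) v - ω11 (b1 x v) u))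
    (d100 : ∀ u y z, ω10 (s10 u y) z = (1/3 : K) * (- ω10 (b1 y u) z - ω10 (b1 z u) y))
    (d101 : ∀ u y v, ω11 (s10 u y) v = (1/3 : K) * (- ω11 (b1 y u) v + ω00 (b2 u v) y))
    (d110 : ∀ u v z, ω00 (s11 u v) z = (1/3 : K) * (ω00 (b2 u v) z - ω11 (b1 z u) v))
    (d111 : ∀ u v w, ω01 (s11 u v) w = (1/3 : K) * (ω01 (b2 u v) w - ω01 (b2 u w) v))
    -- flatness: the natural symplectic product is (super) left-symmetric
    (f1 : ∀ x y z, s00 (s00 x y) z - s00 x (s00 y z) = s00 (s00 y x) z - s00 y (s00 x z))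
    (f2 : ∀ x y u, s01 (s00 x y) u - s01 x (s01 y u) = s01 (s00 y x) u - s01 y (s01 x u))
    (f3 : ∀ x u z, s10 (s01 x u) z - s01 x (s10 u z) = s10 (s10 u x) z - s10 u (s00 x z))
    (f4 : ∀ x u v, s11 (s01 x u) v - s00 x (s11 u v) = s11 (s10 u x) v - s11 u (s01 x v))
    (f5 : ∀ u v z, s00 (s11 u v) z - s11 u (s10 v z) = -(s00 (s11 v u) z - s11 v (s10 u z)))
    (f6 : ∀ u v w, s01 (s11 u v) w - s10 u (s11 v w) = -(s01 (s11 v u) w - s10 v (s11 u w))) :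
    b0 = 0 ∧ b1 = 0 ∧ b2 = 0 ∧ ∀ u : V1, b2 u u = 0 :=
  stmt18_general hdim b0 b1 b2 hb0 ω00 ω01 ω10 ω11 hω00 hω01 hhomog hnd c111 s00 s01 s10 d000 d001
    d010 d100 f1 f3
end

section
/- Let 𝔤 be the 4-dimensional Lie algebra K ⊕ 𝔥₃ with basis {x₁, x₂, x₃, x₄}, nonzero bracket [x₁,x₂] = x₃, and symplectic form ω = x₁*∧x₄* + x₂*∧x₃*. Then (𝔤, [·,·], ω) is a flat quasi-Frobenius Lie algebra: ω is non-degenerate and closed, and the natural symplectic product ⋆ defined by ω(u⋆v,w) = (1/3)(ω([u,v],w) + ω([u,w],v)) is left-symmetric. -/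
/-!
Both the bracket and the symplectic product `⋆` take values in `span {x₃, x₄}` and only see
the `x₁, x₂` coordinates of their arguments. Hence all iterated brackets vanish (Jacobi), and
all iterated products vanish, so every associator of `⋆` is zero (left-symmetry). The product
`⋆` is pinned down explicitly by non-degeneracy of `ω`.
-/

/-- The bracket of `K ⊕ 𝔥₃` in the basis `x₁,…,x₄` (indices `0,…,3`):
`[x₁,x₂] = x₃`. -/
def br19 {K : Type*} [Field K] (u v : Fin 4 → K) : Fin 4 → K :=
  fun i => if i = 2 then u 0 * v 1 - u 1 * v 0 else 0

/-- The symplectic form `ω = x₁*∧x₄* + x₂*∧x₃*`. -/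
def om19 {K : Type*} [Field K] (u v : Fin 4 → K) : K :=
  u 0 * v 3 - u 3 * v 0 + u 1 * v 2 - u 2 * v 1

section

variable {K : Type*} [Field K]

theorem br19_skew (u v : Fin 4 → K) : br19 u v = -br19 v u := by
  funext i
  by_cases h : i = 2
  · simp only [br19, h, if_true, Pi.neg_apply]
    ring
  · simp [br19, h]

theorem br19_br19 (u v w : Fin 4 → K) : br19 (br19 u v) w = 0 := by
  funext i
  simp [br19]

theorem om19_skew (u v : Fin 4 → K) : om19 u v = -om19 v u := by
  simp only [om19]
  ring

theorem om19_sub_left (x y w : Fin 4 → K) : om19 (x - y) w = om19 x w - om19 y w := by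
  simp only [om19, Pi.sub_apply]
  ring

theorem eq_zero_of_forall_om19_eq_zero (u : Fin 4 → K) (h : ∀ v, om19 u v = 0) : u = 0 := by
  funext i
  fin_cases i
  · simpa [om19] using h ![0, 0, 0, 1]
  · simpa [om19] using h ![0, 0, 1, 0]
  · simpa [om19] using h ![0, -1, 0, 0]
  · simpa [om19] using h ![-1, 0, 0, 0]

theorem eq_of_forall_om19_eq (x y : Fin 4 → K) (h : ∀ w, om19 x w = om19 y w) : x = y :=
  sub_eq_zero.mp <| eq_zero_of_forall_om19_eq_zero _ fun w => by
    rw [om19_sub_left, h, sub_self]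

theorem om19_br19 (u v w : Fin 4 → K) : om19 (br19 u v) w = -(u 0 * v 1 - u 1 * v 0) * w 1 := by
  simp only [om19, br19, Fin.reduceEq, ↓reduceIte]
  ring

theorem om19_closed (u v w : Fin 4 → K) :
    om19 (br19 u v) w + om19 (br19 v w) u + om19 (br19 w u) v = 0 := by
  simp only [om19_br19]
  ring

def star19 (u v : Fin 4 → K) : Fin 4 → K :=
  ![0, 0, (2 * u 0 * v 1 - u 1 * v 0) / 3, -(u 1 * v 1) / 3]

theorem om19_star19 (u v w : Fin 4 → K) :
    om19 (star19 u v) w = (1 / 3 : K) * (om19 (br19 u v) w + om19 (br19 u w) v) := by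
  rw [om19_br19, om19_br19]
  simp only [om19, star19, Matrix.cons_val_zero, Matrix.cons_val_one, Matrix.cons_val]
  ring

theorem star19_star19_left (u v w : Fin 4 → K) : star19 (star19 u v) w = 0 := by
  funext i
  fin_cases i <;> simp [star19]

theorem star19_star19_right (u v w : Fin 4 → K) : star19 u (star19 v w) = 0 := by
  funext i
  fin_cases i <;> simp [star19]

theorem eq_star19_of_om19 (s : (Fin 4 → K) → (Fin 4 → K) → (Fin 4 → K))
    (hs : ∀ u v w, om19 (s u v) w = (1 / 3 : K) * (om19 (br19 u v) w + om19 (br19 u w) v)) :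
    s = star19 := by
  funext u v
  exact eq_of_forall_om19_eq _ _ fun w => by rw [hs, om19_star19]

end

theorem stmt19_general {K : Type*} [Field K] :
    (∀ u v : Fin 4 → K, br19 u v = - br19 v u) ∧
    (∀ u v w : Fin 4 → K,
      br19 (br19 u v) w + br19 (br19 v w) u + br19 (br19 w u) v = 0) ∧
    (∀ u v : Fin 4 → K, om19 u v = - om19 v u) ∧
    (∀ u : Fin 4 → K, (∀ v, om19 u v = 0) → u = 0) ∧
    (∀ u v w : Fin 4 → K,
      om19 (br19 u v) w + om19 (br19 v w) u + om19 (br19 w u) v = 0) ∧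
    (∀ s : (Fin 4 → K) → (Fin 4 → K) → (Fin 4 → K),
      (∀ u v w, om19 (s u v) w = (1/3 : K) * (om19 (br19 u v) w + om19 (br19 u w) v)) →
      ∀ u v w, s (s u v) w - s u (s v w) = s (s v u) w - s v (s u w)) := by
  refine ⟨br19_skew, fun u v w => ?_, om19_skew, eq_zero_of_forall_om19_eq_zero, om19_closed,
    fun s hs u v w => ?_⟩
  · simp only [br19_br19, add_zero]
  · obtain rfl := eq_star19_of_om19 s hs
    simp only [star19_star19_left, star19_star19_right]

/-- `(K ⊕ 𝔥₃, [·,·], ω)` with `[x₁,x₂] = x₃` and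
`ω = x₁*∧x₄* + x₂*∧x₃*` is a flat quasi-Frobenius Lie algebra: the bracket is a Lie
bracket, `ω` is skew, non-degenerate and closed, and the natural symplectic product
`⋆` (defined by `ω(u⋆v,w) = (1/3)(ω([u,v],w) + ω([u,w],v))`) is left-symmetric. -/
theorem stmt19 {K : Type*} [Field K] [CharZero K] :
    (∀ u v : Fin 4 → K, br19 u v = - br19 v u) ∧
    (∀ u v w : Fin 4 → K,
      br19 (br19 u v) w + br19 (br19 v w) u + br19 (br19 w u) v = 0) ∧
    (∀ u v : Fin 4 → K, om19 u v = - om19 v u) ∧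
    (∀ u : Fin 4 → K, (∀ v, om19 u v = 0) → u = 0) ∧
    (∀ u v w : Fin 4 → K,
      om19 (br19 u v) w + om19 (br19 v w) u + om19 (br19 w u) v = 0) ∧
    (∀ s : (Fin 4 → K) → (Fin 4 → K) → (Fin 4 → K),
      (∀ u v w, om19 (s u v) w = (1/3 : K) * (om19 (br19 u v) w + om19 (br19 u w) v)) →
      ∀ u v w, s (s u v) w - s u (s v w) = s (s v u) w - s v (s u w)) :=
  stmt19_general
end
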